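/- arXiv:1004.1183 — 5 statements merged into one kernel-verified Lean document; each statement's English description precedes it below -/
import Mathlib

section
/- Let G be a trivalent graph with edge set E, and let M = { u ∈ Z^E : for every vertex v, the sum of the coordinates of u over edges incident to v is even }. Then M is generated as a group by (i) indicator vectors of networks (disjoint unions of edge-paths whose endpoints are leaves, and cycles) and (ii) the elements 2e for each edge e ∈ E. -/
/-!
Common setup: finite (multi)graphs with ordered boundary maps `fst`, `snd`
(the boundary is morally unordered; loops and multiple edges are allowed).
-/

structure TGraph where
  V : Type
  E : Type
  [fintV : Fintype V]
  [fintE : Fintype E]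
  [decV : DecidableEq V]
  [decE : DecidableEq E]
  fst : E → V
  snd : E → V

namespace TGraph

variable (G : TGraph)

instance : Fintype G.V := G.fintV
instance : Fintype G.E := G.fintE
instance : DecidableEq G.V := G.decV
instance : DecidableEq G.E := G.decE

/-- Number of endpoints of `e` equal to `v` (a loop counts twice). -/
def mult (v : G.V) (e : G.E) : ℕ :=
  (if G.fst e = v then 1 else 0) + (if G.snd e = v then 1 else 0)

/-- Valency of a vertex (a loop contributes two). -/
def degree (v : G.V) : ℕ := ∑ e, G.mult v e

/-- A leaf is a vertex incident to exactly one edge (valency one). -/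
def IsLeaf (v : G.V) : Prop := G.degree v = 1

instance : DecidablePred G.IsLeaf := fun v => inferInstanceAs (Decidable (G.degree v = 1))

/-- A graph is trivalent when every non-leaf vertex has valency three. -/
def Trivalent : Prop := ∀ v, G.degree v = 1 ∨ G.degree v = 3

/-- The number of leaves. -/
def numLeaves : ℕ := Fintype.card {v : G.V // G.IsLeaf v}

/-- The number of inner (non-leaf) vertices. -/
def numInner : ℕ := Fintype.card {v : G.V // ¬ G.IsLeaf v}

/-- The number of connected components. -/
noncomputable def components : ℕ :=
  Nat.card (Quot fun v w : G.V =>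
    ∃ e, (G.fst e = v ∧ G.snd e = w) ∨ (G.fst e = w ∧ G.snd e = v))

/-- The first Betti number, computed via the Euler characteristic:
`g = |E| - |V| + c`. -/
noncomputable def betti : ℤ := (Fintype.card G.E : ℤ) - Fintype.card G.V + G.components

/-- The value of the vertex functional `v = Σ_{e ∋ v} e*` on an edge labeling. -/
def vsum (v : G.V) (u : G.E → ℤ) : ℤ := ∑ e, (G.mult v e : ℤ) * u e

/-- Membership in the graded lattice `M^gr = ℤ ⊕ M`: the edge labeling has even
sum at every inner vertex. -/
def InMgr (ω : ℤ × (G.E → ℤ)) : Prop :=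
  ∀ v, ¬ G.IsLeaf v → Even (G.vsum v ω.2)

/-- Membership in the graded cone `τ(G) ⊂ ℤ ⊕ M`: nonnegative degree and edge
values, parity at inner vertices, the triangle inequalities at every inner
vertex (encoded as: twice each incident value is at most the local sum), and
the degree bound `deg ω ≥ deg_v ω` at every inner vertex. -/
def InCone (ω : ℤ × (G.E → ℤ)) : Prop :=
  0 ≤ ω.1 ∧ (∀ e, 0 ≤ ω.2 e) ∧
  ∀ v, ¬ G.IsLeaf v →
    Even (G.vsum v ω.2) ∧
    (∀ e, G.mult v e ≠ 0 → 2 * ω.2 e ≤ G.vsum v ω.2) ∧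
    G.vsum v ω.2 ≤ 2 * ω.1

/-- A network: a 0-1 edge labeling with even local sum at every inner vertex.
For trivalent graphs this is exactly a disjoint union of leaf-to-leaf
edge-paths and cycles. -/
def IsNetwork (u : G.E → ℤ) : Prop :=
  (∀ e, u e = 0 ∨ u e = 1) ∧ ∀ v, ¬ G.IsLeaf v → Even (G.vsum v u)

end TGraph

/-- The lattice `M` of edge labelings with even sum at every
vertex is generated as a group by networks and by the doubled edges `2e`. -/
theorem lattice_generated_by_networks_and_doubled_edges (G : TGraph) (hG : G.Trivalent)
    (u : G.E → ℤ) :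
    (∀ v, ¬ G.IsLeaf v → Even (G.vsum v u)) ↔
      u ∈ AddSubgroup.closure
        ({w : G.E → ℤ | G.IsNetwork w} ∪
          {w : G.E → ℤ | ∃ e, w = fun e' => if e' = e then 2 else 0}) := by
  classical
  constructor
  · intro hu
    -- residue: entries are u e % 2
    set w : G.E → ℤ := fun e => u e % 2 with hw
    have hwu : ∀ e, w e - u e = -(2 * (u e / 2)) := by
      intro e
      have := Int.mul_ediv_add_emod (u e) 2
      simp only [hw]
      omega
    have hwnet : G.IsNetwork w := by
      refine ⟨fun e => Int.emod_two_eq (u e), fun v hv => ?_⟩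
      have hdiff : Even (G.vsum v w - G.vsum v u) := by
        have : G.vsum v w - G.vsum v u = ∑ e, (G.mult v e : ℤ) * (w e - u e) := by
          simp [TGraph.vsum, mul_sub, Finset.sum_sub_distrib]
        rw [this]
        apply Finset.even_sum
        intro e _
        rw [hwu e]
        exact ⟨-((G.mult v e : ℤ) * (u e / 2)), by ring⟩
      have := (hu v hv).add hdiff
      simpa using this
    have hwmem : w ∈ AddSubgroup.closure
        ({w : G.E → ℤ | G.IsNetwork w} ∪
          {w : G.E → ℤ | ∃ e, w = fun e' => if e' = e then 2 else 0}) :=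
      AddSubgroup.subset_closure (Or.inl hwnet)
    have hsum : u = w + ∑ e, (u e / 2) • (fun e' => if e' = e then (2:ℤ) else 0) := by
      funext e'
      simp only [Pi.add_apply, Finset.sum_apply, Pi.smul_apply, smul_eq_mul,
        mul_ite, mul_zero]
      rw [Finset.sum_ite_eq Finset.univ e']
      simp only [Finset.mem_univ, if_true, hw]
      omega
    have hgen : ∀ e : G.E, (fun e' => if e' = e then (2:ℤ) else 0) ∈ AddSubgroup.closure
        ({w : G.E → ℤ | G.IsNetwork w} ∪
          {w : G.E → ℤ | ∃ e, w = fun e' => if e' = e then 2 else 0}) := by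
      intro e
      exact AddSubgroup.subset_closure (Or.inr ⟨e, rfl⟩)
    rw [hsum]
    exact AddSubgroup.add_mem _ hwmem (AddSubgroup.sum_mem _ fun e _ =>
      AddSubgroup.zsmul_mem _ (hgen e) _)
  · intro hu
    -- the parity condition defines a subgroup
    let M : AddSubgroup (G.E → ℤ) :=
      { carrier := {u | ∀ v, ¬ G.IsLeaf v → Even (G.vsum v u)}
        zero_mem' := by intro v _; simp [TGraph.vsum]
        add_mem' := by
          intro a b ha hb v hv
          have : G.vsum v (a + b) = G.vsum v a + G.vsum v b := by
            simp [TGraph.vsum, mul_add, Finset.sum_add_distrib]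
          rw [this]; exact (ha v hv).add (hb v hv)
        neg_mem' := by
          intro a ha v hv
          have : G.vsum v (-a) = -(G.vsum v a) := by
            simp [TGraph.vsum]
          rw [this]; exact (ha v hv).neg }
    have hle : AddSubgroup.closure
        ({w : G.E → ℤ | G.IsNetwork w} ∪
          {w : G.E → ℤ | ∃ e, w = fun e' => if e' = e then 2 else 0}) ≤ M := by
      rw [AddSubgroup.closure_le]
      rintro x (hx | ⟨e, rfl⟩)
      · exact hx.2
      · intro v hv
        have : G.vsum v (fun e' => if e' = e then (2:ℤ) else 0)
            = 2 * (G.mult v e : ℤ) := by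
          simp [TGraph.vsum, mul_ite, Finset.sum_ite_eq' Finset.univ e, mul_comm]
        rw [this]; exact ⟨(G.mult v e : ℤ), by ring⟩
    exact hle hu
end

section
/- Let G be a trivalent graph and τ(G) ⊂ Z ⊕ M the graded cone of G. An element ω ∈ τ(G) has degree 1 if and only if the projection of ω to M is a network. In particular, the degree-1 lattice points of τ(G) are exactly the networks. -/
/-- The degree-1 lattice points of the cone `τ(G)` are exactly the
networks. (We assume each edge has at least one inner endpoint, as is the case
for graphs assembled from tripods.) -/
theorem degree_one_points_are_networks (G : TGraph) (hG : G.Trivalent)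
    (hE : ∀ e, ¬ G.IsLeaf (G.fst e) ∨ ¬ G.IsLeaf (G.snd e)) :
    {ω : ℤ × (G.E → ℤ) | G.InCone ω ∧ ω.1 = 1} =
      {ω : ℤ × (G.E → ℤ) | ω.1 = 1 ∧ G.IsNetwork ω.2} := by
  have hmfst : ∀ e, G.mult (G.fst e) e ≠ 0 := by
    intro e; unfold TGraph.mult; simp
  have hmsnd : ∀ e, G.mult (G.snd e) e ≠ 0 := by
    intro e; unfold TGraph.mult; split <;> simp
  ext ω
  simp only [Set.mem_setOf_eq]
  constructor
  · rintro ⟨⟨h0, hnn, hv⟩, hd⟩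
    refine ⟨hd, ?_, fun v hvl => (hv v hvl).1⟩
    intro e
    have key : ∀ v : G.V, ¬ G.IsLeaf v → G.mult v e ≠ 0 → ω.2 e = 0 ∨ ω.2 e = 1 := by
      intro v hvl hm
      obtain ⟨_, h2, h3⟩ := hv v hvl
      have := h2 e hm
      have := hnn e
      omega
    rcases hE e with h | h
    · exact key _ h (hmfst e)
    · exact key _ h (hmsnd e)
  · rintro ⟨hd, h01, hev⟩
    have hnn : ∀ e, 0 ≤ ω.2 e := by intro e; rcases h01 e with h | h <;> omega
    have hle1 : ∀ e, ω.2 e ≤ 1 := by intro e; rcases h01 e with h | h <;> omega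
    have hvnn : ∀ v, 0 ≤ G.vsum v ω.2 := by
      intro v
      apply Finset.sum_nonneg
      intro e _
      exact mul_nonneg (by positivity) (hnn e)
    refine ⟨⟨by omega, hnn, ?_⟩, hd⟩
    intro v hvl
    have hdeg : G.degree v = 3 := (hG v).resolve_left hvl
    have hub : G.vsum v ω.2 ≤ 3 := by
      have : G.vsum v ω.2 ≤ ∑ e, (G.mult v e : ℤ) * 1 := by
        apply Finset.sum_le_sum
        intro e _
        exact mul_le_mul_of_nonneg_left (hle1 e) (by positivity)
      calc G.vsum v ω.2 ≤ ∑ e, (G.mult v e : ℤ) * 1 := this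
        _ = ((∑ e, G.mult v e : ℕ) : ℤ) := by push_cast; simp
        _ = 3 := by rw [show (∑ e, G.mult v e) = G.degree v from rfl, hdeg]; norm_num
    obtain ⟨k, hk⟩ := hev v hvl
    refine ⟨⟨k, hk⟩, ?_, by omega⟩
    intro e hm
    rcases h01 e with h | h
    · rw [h]; simpa using hvnn v
    · have hone : (1 : ℤ) ≤ G.vsum v ω.2 := by
        have hterm : (1 : ℤ) ≤ (G.mult v e : ℤ) * ω.2 e := by
          have : (1 : ℤ) ≤ (G.mult v e : ℤ) := by exact_mod_cast Nat.one_le_iff_ne_zero.mpr hm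
          nlinarith [hnn e]
        calc (1 : ℤ) ≤ (G.mult v e : ℤ) * ω.2 e := hterm
          _ ≤ G.vsum v ω.2 := by
            apply Finset.single_le_sum (f := fun e => (G.mult v e : ℤ) * ω.2 e)
              (fun i _ => mul_nonneg (by positivity) (hnn i)) (Finset.mem_univ e)
      omega
end

section
/- Let G be a trivalent graph with first Betti number at most 1. Then the graded semigroup τ(G) is generated by its elements of degree 1 and degree 2. (For a trivalent tree, degree 1 alone suffices.) -/
/-!
For a forest, every `(d, x) ∈ τ(G)` is a sum of `d` networks, i.e. of elements of degree one.
Cut off a cherry (an inner vertex `v` whose edges `e₁`, `e₂` lead to leaves), decompose the rest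
by induction, and distribute the values `a = x e₁`, `b = x e₂` over the `d` pieces according to
the value (`0` or `1`) of each piece on the third edge `f` at `v`: the triangle inequalities, the
parity of `a + b + x f` and `a + b + x f ≤ 2d` are exactly what this needs. Being a forest is used
through the cycle rank `|A| + c(A) - |V|` of edge sets `A`, which is monotone in `A`; it forces
fewer edges than vertices among the inner vertices, hence a cherry.

If `g = 1`, cutting a non-bridge edge `e₀` into two pendant edges gives a forest. Its networks
either agree on the two halves of `e₀`, and then descend to degree-one elements of `τ(G)`, or
differ there; since both halves carry the same total, the latter pair up into elements of
degree two.
-/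

open Finset

lemma exists_zeroOne_sum_eq {ι : Type*} [Fintype ι] {n : ℤ} (h0 : 0 ≤ n)
    (hn : n ≤ Fintype.card ι) : ∃ p : ι → ℤ, (∀ i, p i = 0 ∨ p i = 1) ∧ ∑ i, p i = n := by
  classical
  obtain ⟨K, -, hK⟩ := exists_subset_card_eq (s := univ) (n := n.toNat) (by simp; omega)
  refine ⟨fun i => if i ∈ K then 1 else 0, fun i => by dsimp only; split_ifs <;> simp, ?_⟩
  simp [hK]
  omega

lemma exists_tripod_completion {ι : Type*} [Fintype ι] (c : ι → ℤ)
    (hc : ∀ i, c i = 0 ∨ c i = 1) {a b : ℤ} (heven : Even (a + b + ∑ i, c i))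
    (ha : 2 * a ≤ a + b + ∑ i, c i) (hb : 2 * b ≤ a + b + ∑ i, c i)
    (hC : 2 * ∑ i, c i ≤ a + b + ∑ i, c i) (hd : a + b + ∑ i, c i ≤ 2 * Fintype.card ι) :
    ∃ p q : ι → ℤ, (∀ i, p i = 0 ∨ p i = 1) ∧ (∀ i, q i = 0 ∨ q i = 1) ∧
      ∑ i, p i = a ∧ ∑ i, q i = b ∧ ∀ i, Even (p i + q i + c i) := by
  classical
  obtain ⟨k, hk⟩ := heven
  set R := univ.filter (c · = 1)
  have hR : ∑ i, c i = #R := by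
    rw [← sum_boole]
    exact sum_congr rfl fun i _ => by rcases hc i with h | h <;> simp [h]
  have hRc : #Rᶜ + #R = Fintype.card ι := card_compl_add_card R
  -- `(p, q)` will be `(1, 0)` on `K`, `(0, 1)` on `R \ K`, `(1, 1)` on `Y`, `(0, 0)` elsewhere
  obtain ⟨K, hKR, hK⟩ := exists_subset_card_eq (s := R) (n := (k - b).toNat) (by omega)
  obtain ⟨Y, hYR, hY⟩ := exists_subset_card_eq (s := Rᶜ) (n := (k - #R).toNat) (by omega)
  have hmem : ∀ i, (i ∈ K → c i = 1 ∧ i ∉ Y) ∧ (i ∈ Y → c i = 0) := fun i => by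
    have hKi := @hKR i
    have hYi := @hYR i
    simp only [R, mem_compl, mem_filter, mem_univ, true_and] at hKi hYi
    rcases hc i with h | h <;> simp_all
  refine ⟨fun i => (if i ∈ K then 1 else 0) + (if i ∈ Y then 1 else 0),
    fun i => c i - (if i ∈ K then 1 else 0) + (if i ∈ Y then 1 else 0),
    fun i => ?_, fun i => ?_, ?_, ?_, fun i => ⟨c i + if i ∈ Y then 1 else 0, by ring⟩⟩
  · have := hmem i; dsimp only; rcases hc i with h | h <;> split_ifs <;> simp_all
  · have := hmem i; dsimp only; rcases hc i with h | h <;> split_ifs <;> simp_all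
  · simp only [sum_add_distrib, sum_boole, filter_mem_eq_inter, univ_inter, hK, hY]
    omega
  · simp only [sum_add_distrib, sum_sub_distrib, sum_boole, filter_mem_eq_inter, univ_inter,
      hK, hY, hR]
    omega

lemma AddSubmonoid.sum_mem_of_balanced {ι M : Type*} [AddCommMonoid M] {S : AddSubmonoid M}
    (f : ι → M) (δ : ι → ℤ) (hδ : ∀ i, |δ i| ≤ 1) (hS₁ : ∀ i, δ i = 0 → f i ∈ S)
    (hS₂ : ∀ i j, δ i + δ j = 0 → f i + f j ∈ S) (T : Finset ι) (hT : ∑ i ∈ T, δ i = 0) :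
    ∑ i ∈ T, f i ∈ S := by
  classical
  induction T using Finset.strongInduction with
  | H T ih =>
  rcases T.eq_empty_or_nonempty with rfl | ⟨i, hi⟩
  · simp
  have hTi := add_sum_erase T δ hi
  rw [← add_sum_erase T f hi]
  by_cases h0 : δ i = 0
  · exact S.add_mem (hS₁ i h0) (ih _ (erase_ssubset hi) (by omega))
  -- the rest of `T` has sum `-δ i`, so it contains some `j` with `δ j = -δ i`
  obtain ⟨j, hj, hji⟩ : ∃ j ∈ T.erase i, δ j * δ i < 0 := by
    refine exists_lt_of_sum_lt ?_
    rw [← sum_mul, sum_const_zero, show ∑ j ∈ T.erase i, δ j = -δ i by omega]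
    nlinarith [mul_self_pos.mpr h0]
  have hij : δ i + δ j = 0 := by
    rcases abs_le.mp (hδ i) with ⟨_, _⟩
    rcases abs_le.mp (hδ j) with ⟨_, _⟩
    rcases lt_trichotomy (δ i) 0 with h | h | h <;>
      rcases lt_trichotomy (δ j) 0 with h' | h' | h' <;> nlinarith
  have hTj := add_sum_erase _ δ hj
  rw [← add_sum_erase _ f hj, ← add_assoc]
  exact S.add_mem (hS₂ i j hij) (ih _ ((erase_ssubset hj).trans (erase_ssubset hi)) (by omega))

namespace TGraph

section Components

variable (G : TGraph)

def AdjOn (A : Finset G.E) (v w : G.V) : Prop :=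
  ∃ e ∈ A, (G.fst e = v ∧ G.snd e = w) ∨ (G.fst e = w ∧ G.snd e = v)

noncomputable def componentsOn (A : Finset G.E) : ℕ := Nat.card (Quot (G.AdjOn A))

noncomputable def cycleRank (A : Finset G.E) : ℤ :=
  #A + G.componentsOn A - Fintype.card G.V

variable {G}

lemma AdjOn.mono {A B : Finset G.E} (h : A ⊆ B) : G.AdjOn A ≤ G.AdjOn B :=
  fun _ _ ⟨e, he, hvw⟩ => ⟨e, h he, hvw⟩

lemma AdjOn.eq_of_forall {X : Type*} {A : Finset G.E} (φ : G.V → X)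
    (h : ∀ e ∈ A, φ (G.fst e) = φ (G.snd e)) {v w : G.V} : G.AdjOn A v w → φ v = φ w := by
  rintro ⟨e, he, ⟨rfl, rfl⟩ | ⟨rfl, rfl⟩⟩
  exacts [h e he, (h e he).symm]

lemma quot_mk_eq_iff_of_isolated {A : Finset G.E} {w : G.V}
    (hw : ∀ e ∈ A, G.fst e ≠ w ∧ G.snd e ≠ w) {z : G.V} :
    Quot.mk (G.AdjOn A) z = Quot.mk _ w ↔ z = w := by
  refine ⟨fun h => ?_, fun h => h ▸ rfl⟩
  have key := congrArg (Quot.lift (· = w) fun a b hab => propext ?_) h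
  · simpa using key
  obtain ⟨e, he, ⟨rfl, rfl⟩ | ⟨rfl, rfl⟩⟩ := hab <;> simp [(hw e he).1, (hw e he).2]

lemma componentsOn_empty : G.componentsOn ∅ = Fintype.card G.V := by
  rw [componentsOn, ← Nat.card_eq_fintype_card]
  refine Nat.card_congr ⟨Quot.lift id ?_, Quot.mk _, fun c => ?_, fun _ => rfl⟩
  · rintro _ _ ⟨e, he, -⟩
    simp at he
  · induction c using Quot.ind; rfl

lemma componentsOn_insert_of_eqvGen {A : Finset G.E} {e : G.E}
    (h : Relation.EqvGen (G.AdjOn A) (G.fst e) (G.snd e)) :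
    G.componentsOn (insert e A) = G.componentsOn A := by
  refine Nat.card_congr ⟨Quot.lift (Quot.mk _) ?_,
    Quot.map id (AdjOn.mono (subset_insert e A)), fun c => ?_, fun c => ?_⟩
  · refine fun v w => AdjOn.eq_of_forall _ fun f hf => ?_
    rcases Finset.mem_insert.mp hf with rfl | hf
    · exact Quot.eqvGen_sound h
    · exact Quot.sound ⟨f, hf, Or.inl ⟨rfl, rfl⟩⟩
  all_goals induction c using Quot.ind; rfl

lemma componentsOn_eq_insert_add_one {A : Finset G.E} {e : G.E}
    (h : ¬ Relation.EqvGen (G.AdjOn A) (G.fst e) (G.snd e)) :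
    G.componentsOn A = G.componentsOn (insert e A) + 1 := by
  classical
  set a := Quot.mk (G.AdjOn A) (G.fst e)
  set b := Quot.mk (G.AdjOn A) (G.snd e)
  have hab : a ≠ b := fun hab => h (Quot.eqvGen_exact hab)
  let π : Quot (G.AdjOn A) → Quot (G.AdjOn (insert e A)) :=
    Quot.map id (AdjOn.mono (subset_insert e A))
  have hπab : π a = π b := Quot.sound ⟨e, mem_insert_self e A, Or.inl ⟨rfl, rfl⟩⟩
  -- adding `e` merges the class `b` of `G.snd e` into the class `a` of `G.fst e`
  let r (v : G.V) : {c // c ≠ b} :=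
    if hv : Quot.mk _ v = b then ⟨a, hab⟩ else ⟨Quot.mk _ v, hv⟩
  have hr : ∀ v w, G.AdjOn (insert e A) v w → r v = r w := by
    refine fun v w => AdjOn.eq_of_forall r fun f hf => ?_
    rcases Finset.mem_insert.mp hf with rfl | hf
    · simp [r, a, b, hab]
    · have : Quot.mk (G.AdjOn A) (G.fst f) = Quot.mk _ (G.snd f) :=
        Quot.sound ⟨f, hf, Or.inl ⟨rfl, rfl⟩⟩
      simp only [r, this]
  have hρ : Quot (G.AdjOn (insert e A)) ≃ {c // c ≠ b} := by
    refine ⟨Quot.lift r hr, fun c => π c, fun c => ?_, fun ⟨c, hc⟩ => ?_⟩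
    · induction c using Quot.ind with
      | _ v =>
        by_cases hv : Quot.mk (G.AdjOn A) v = b
        · simp only [r, hv, dif_pos]
          exact hπab.trans (by rw [← hv]; rfl)
        · simp only [r, hv, dif_neg, not_false_eq_true]; rfl
    · induction c using Quot.ind with
      | _ v => exact dif_neg hc
  rw [componentsOn, componentsOn, Nat.card_congr hρ, ← Finite.card_option,
    Nat.card_congr (Equiv.optionSubtypeNe b)]

lemma cycleRank_le_insert (A : Finset G.E) (e : G.E) :
    G.cycleRank A ≤ G.cycleRank (insert e A) := by
  by_cases he : e ∈ A
  · rw [insert_eq_of_mem he]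
  by_cases h : Relation.EqvGen (G.AdjOn A) (G.fst e) (G.snd e)
  · have := componentsOn_insert_of_eqvGen h
    simp only [cycleRank, card_insert_of_notMem he]
    omega
  · have := componentsOn_eq_insert_add_one h
    simp only [cycleRank, card_insert_of_notMem he]
    omega

lemma cycleRank_mono {A B : Finset G.E} (h : A ⊆ B) : G.cycleRank A ≤ G.cycleRank B := by
  rw [← union_sdiff_of_subset h]
  induction B \ A using Finset.induction_on with
  | empty => simp
  | insert e C _ ih => exact ih.trans (union_insert e A C ▸ cycleRank_le_insert _ e)

lemma cycleRank_eq_zero_of_forall_not_eqvGen {A : Finset G.E}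
    (h : ∀ e ∈ A, ¬ Relation.EqvGen (G.AdjOn (A.erase e)) (G.fst e) (G.snd e)) :
    G.cycleRank A = 0 := by
  induction A using Finset.induction_on with
  | empty => simp [cycleRank, componentsOn_empty]
  | insert e A he ih =>
    have hA : G.cycleRank A = 0 := ih fun f hf hrel => h f (mem_insert_of_mem hf)
      (Relation.EqvGen.mono (AdjOn.mono (erase_subset_erase f (subset_insert e A))) _ _ hrel)
    have hc := componentsOn_eq_insert_add_one (e := e) (A := A) <| by
      simpa [erase_insert he] using h e (mem_insert_self e A)
    simp only [cycleRank, card_insert_of_notMem he] at hA ⊢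
    omega

lemma exists_componentsOn_erase_eq {A : Finset G.E} (h : 0 < G.cycleRank A) :
    ∃ e ∈ A, G.componentsOn (A.erase e) = G.componentsOn A := by
  by_contra! hne
  refine h.ne' (cycleRank_eq_zero_of_forall_not_eqvGen fun e he hrel => hne e he ?_)
  rw [← componentsOn_insert_of_eqvGen hrel, insert_erase he]

lemma card_compl_lt_componentsOn {A : Finset G.E} {I : Finset G.V} (hI : I.Nonempty)
    (hA : ∀ e ∈ A, G.fst e ∈ I ∧ G.snd e ∈ I) : #Iᶜ < G.componentsOn A := by
  obtain ⟨v₀, hv₀⟩ := hI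
  have hiso : ∀ w ∉ I, ∀ e ∈ A, G.fst e ≠ w ∧ G.snd e ≠ w := fun w hw e he =>
    ⟨fun h => hw (h ▸ (hA e he).1), fun h => hw (h ▸ (hA e he).2)⟩
  have hinj : Set.InjOn (Quot.mk (G.AdjOn A)) ↑(insert v₀ Iᶜ) := by
    intro x hx y hy hxy
    simp only [coe_insert, coe_compl, Set.mem_insert_iff, Set.mem_compl_iff, mem_coe] at hx hy
    rcases hy with rfl | hy
    · rcases hx with rfl | hx
      · rfl
      · exact ((quot_mk_eq_iff_of_isolated (hiso x hx)).mp hxy.symm).symm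
    · exact (quot_mk_eq_iff_of_isolated (hiso y hy)).mp hxy
  have : Fintype (Quot (G.AdjOn A)) := Fintype.ofFinite _
  have hle := card_le_card_of_injOn _ (fun _ _ => mem_coe.mpr (mem_univ _)) hinj
  rw [card_insert_of_notMem (by simpa using hv₀), card_univ] at hle
  rw [componentsOn, Nat.card_eq_fintype_card]
  omega

lemma card_lt_card_of_cycleRank_nonpos {A : Finset G.E} {I : Finset G.V} (hI : I.Nonempty)
    (hA : ∀ e ∈ A, G.fst e ∈ I ∧ G.snd e ∈ I) (hrank : G.cycleRank A ≤ 0) : #A < #I := by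
  have h := card_compl_lt_componentsOn hI hA
  have hI : #Iᶜ + #I = Fintype.card G.V := by rw [card_compl]; have := card_le_univ I; omega
  simp only [cycleRank] at hrank
  omega

end Components

section Forest

variable (G : TGraph)

def degreeOn (A : Finset G.E) (v : G.V) : ℕ := ∑ e ∈ A, G.mult v e

def vsumOn (A : Finset G.E) (v : G.V) (x : G.E → ℤ) : ℤ := ∑ e ∈ A, (G.mult v e : ℤ) * x e

def InConeOn (A : Finset G.E) (d : ℕ) (x : G.E → ℤ) : Prop :=
  (∀ e, 0 ≤ x e ∧ x e ≤ d) ∧ ∀ v, G.degreeOn A v = 3 →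
    Even (G.vsumOn A v x) ∧ (∀ e, G.mult v e ≠ 0 → 2 * x e ≤ G.vsumOn A v x) ∧
      G.vsumOn A v x ≤ 2 * d

def IsNetworkOn (A : Finset G.E) (u : G.E → ℤ) : Prop :=
  (∀ e, u e = 0 ∨ u e = 1) ∧ ∀ v, G.degreeOn A v = 3 → Even (G.vsumOn A v u)

structure IsCherry (A : Finset G.E) (v : G.V) (e₁ e₂ : G.E) : Prop where
  degreeOn_eq : G.degreeOn A v = 3
  left_mem : e₁ ∈ A
  right_mem : e₂ ∈ A
  ne : e₁ ≠ e₂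
  mult_left : G.mult v e₁ = 1
  mult_right : G.mult v e₂ = 1
  mult_eq_zero : ∀ w ≠ v, G.degreeOn A w = 3 → G.mult w e₁ = 0 ∧ G.mult w e₂ = 0

variable {G}

lemma degreeOn_erase {A : Finset G.E} {e : G.E} (he : e ∈ A) (v : G.V) :
    G.degreeOn A v = G.mult v e + G.degreeOn (A.erase e) v :=
  (add_sum_erase A _ he).symm

lemma vsumOn_erase {A : Finset G.E} {e : G.E} (he : e ∈ A) (v : G.V) (y : G.E → ℤ) :
    G.vsumOn A v y = G.mult v e * y e + G.vsumOn (A.erase e) v y :=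
  (add_sum_erase A _ he).symm

lemma vsumOn_congr {A : Finset G.E} {v : G.V} {y z : G.E → ℤ} (h : ∀ e ∈ A, y e = z e) :
    G.vsumOn A v y = G.vsumOn A v z :=
  sum_congr rfl fun e he => by rw [h e he]

lemma exists_vsumOn_eq_of_degreeOn_eq_one {A : Finset G.E} {v : G.V}
    (h : G.degreeOn A v = 1) : ∃ f ∈ A, G.mult v f = 1 ∧ ∀ y, G.vsumOn A v y = y f := by
  obtain ⟨f, hf, hne⟩ := exists_ne_zero_of_sum_ne_zero (h.trans_ne one_ne_zero)
  have hsplit := degreeOn_erase hf v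
  have hzero : G.degreeOn (A.erase f) v = 0 := by omega
  have hrest : ∀ e ∈ A.erase f, G.mult v e = 0 := sum_eq_zero_iff.mp hzero
  have hf1 : G.mult v f = 1 := by omega
  refine ⟨f, hf, hf1, fun y => ?_⟩
  rw [vsumOn_erase hf, vsumOn, sum_eq_zero fun e he => by simp [hrest e he], hf1]
  simp

lemma mult_ne_zero_iff {v : G.V} {e : G.E} : G.mult v e ≠ 0 ↔ G.fst e = v ∨ G.snd e = v := by
  unfold mult; split_ifs <;> simp_all

lemma mult_eq_one_of_crossing {I : Finset G.V} {v : G.V} {e : G.E} (hv : v ∈ I)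
    (hve : G.mult v e ≠ 0) (hcross : ¬ (G.fst e ∈ I ∧ G.snd e ∈ I)) :
    G.mult v e = 1 ∧ ∀ w ∈ I, w ≠ v → G.mult w e = 0 := by
  unfold mult at *
  refine ⟨?_, fun w hw hwv => ?_⟩ <;> split_ifs at * <;> simp_all

lemma sum_mult_eq_two {I : Finset G.V} {e : G.E} (h : G.fst e ∈ I ∧ G.snd e ∈ I) :
    ∑ v ∈ I, G.mult v e = 2 := by
  simp [mult, sum_add_distrib, h.1, h.2]

lemma exists_mem_sum_mult_lt_two {B : Finset G.E} {I : Finset G.V} (hI : I.Nonempty)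
    (hB : ∀ e ∈ B, G.fst e ∈ I ∧ G.snd e ∈ I) (hrank : G.cycleRank B ≤ 0) :
    ∃ v ∈ I, ∑ e ∈ B, G.mult v e < 2 := by
  refine exists_lt_of_sum_lt ?_
  rw [sum_comm, sum_congr rfl fun e he => sum_mult_eq_two (hB e he)]
  simp only [sum_const, smul_eq_mul]
  exact Nat.mul_lt_mul_of_pos_right (card_lt_card_of_cycleRank_nonpos hI hB hrank) two_pos

lemma exists_isCherry {A : Finset G.E} (hrank : G.cycleRank A ≤ 0) {v₀ : G.V}
    (hv₀ : G.degreeOn A v₀ = 3) : ∃ v e₁ e₂, G.IsCherry A v e₁ e₂ := by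
  set I := univ.filter (G.degreeOn A · = 3)
  set AI := A.filter (fun e => G.fst e ∈ I ∧ G.snd e ∈ I)
  obtain ⟨v, hvI, hv⟩ := exists_mem_sum_mult_lt_two (B := AI) (I := I) ⟨v₀, by simp [I, hv₀]⟩
    (fun e he => (mem_filter.mp he).2) ((cycleRank_mono (filter_subset _ A)).trans hrank)
  have hv3 : G.degreeOn A v = 3 := (mem_filter.mp hvI).2
  -- `v` meets at most one edge inside `I`, so at least two of its three edges leave `I`
  set B := (A.filter fun e => ¬ (G.fst e ∈ I ∧ G.snd e ∈ I)).filter (G.mult v · ≠ 0)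
  have hB : ∀ e ∈ B, e ∈ A ∧ G.mult v e = 1 ∧ ∀ w ∈ I, w ≠ v → G.mult w e = 0 :=
    fun e he => by
      simp only [B, mem_filter] at he
      exact ⟨he.1.1, mult_eq_one_of_crossing hvI he.2 he.1.2⟩
  have hBcard : 1 < #B := by
    have hsplit := sum_filter_add_sum_filter_not A (fun e => G.fst e ∈ I ∧ G.snd e ∈ I)
      (G.mult v)
    have hBsum : ∑ e ∈ A with ¬ (G.fst e ∈ I ∧ G.snd e ∈ I), G.mult v e = #B := by
      rw [← sum_filter_ne_zero, sum_congr rfl fun e he => (hB e he).2.1, sum_const,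
        smul_eq_mul, mul_one]
    change ∑ e ∈ AI, _ + _ = G.degreeOn A v at hsplit
    omega
  obtain ⟨e₁, he₁, e₂, he₂, hne⟩ := one_lt_card.mp hBcard
  obtain ⟨he₁A, hm₁, hw₁⟩ := hB e₁ he₁
  obtain ⟨he₂A, hm₂, hw₂⟩ := hB e₂ he₂
  exact ⟨v, e₁, e₂, hv3, he₁A, he₂A, hne, hm₁, hm₂, fun w hwv hw =>
    ⟨hw₁ w (by simp [I, hw]) hwv, hw₂ w (by simp [I, hw]) hwv⟩⟩

namespace IsCherry

variable {A : Finset G.E} {v : G.V} {e₁ e₂ : G.E} (hc : G.IsCherry A v e₁ e₂)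
include hc

lemma erase_ssubset : (A.erase e₁).erase e₂ ⊂ A :=
  (Finset.erase_ssubset (mem_erase.mpr ⟨hc.ne.symm, hc.right_mem⟩)).trans
    (Finset.erase_ssubset hc.left_mem)

lemma degreeOn_eq_add (w : G.V) :
    G.degreeOn A w = G.mult w e₁ + G.mult w e₂ + G.degreeOn ((A.erase e₁).erase e₂) w := by
  rw [degreeOn_erase hc.left_mem, degreeOn_erase (mem_erase.mpr ⟨hc.ne.symm, hc.right_mem⟩)]
  ring

lemma vsumOn_eq_add (w : G.V) (y : G.E → ℤ) :
    G.vsumOn A w y = G.mult w e₁ * y e₁ + G.mult w e₂ * y e₂ +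
      G.vsumOn ((A.erase e₁).erase e₂) w y := by
  rw [vsumOn_erase hc.left_mem, vsumOn_erase (mem_erase.mpr ⟨hc.ne.symm, hc.right_mem⟩)]
  ring

lemma exists_stem : ∃ f ∈ (A.erase e₁).erase e₂, G.mult v f = 1 ∧
    ∀ y, G.vsumOn ((A.erase e₁).erase e₂) v y = y f := by
  refine exists_vsumOn_eq_of_degreeOn_eq_one ?_
  have := hc.degreeOn_eq_add v
  rw [hc.degreeOn_eq, hc.mult_left, hc.mult_right] at this
  omega

lemma degreeOn_erase_eq_three (hA : ∀ w, G.degreeOn A w ≤ 3) {w : G.V}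
    (hw : G.degreeOn ((A.erase e₁).erase e₂) w = 3) :
    G.degreeOn A w = 3 ∧ ∀ y, G.vsumOn ((A.erase e₁).erase e₂) w y = G.vsumOn A w y := by
  have hdeg := hc.degreeOn_eq_add w
  have := hA w
  refine ⟨by omega, fun y => ?_⟩
  rw [hc.vsumOn_eq_add, show G.mult w e₁ = 0 by omega, show G.mult w e₂ = 0 by omega]
  simp

lemma inConeOn_erase (hA : ∀ w, G.degreeOn A w ≤ 3) {d : ℕ} {x : G.E → ℤ}
    (hx : G.InConeOn A d x) : G.InConeOn ((A.erase e₁).erase e₂) d x := by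
  refine ⟨hx.1, fun w hw => ?_⟩
  obtain ⟨hw3, hsum⟩ := hc.degreeOn_erase_eq_three hA hw
  rw [hsum]
  exact hx.2 w hw3

lemma isNetworkOn_update {u : G.E → ℤ}
    (hu : G.IsNetworkOn ((A.erase e₁).erase e₂) u) {f : G.E} (hf : f ∈ (A.erase e₁).erase e₂)
    (hvf : ∀ y, G.vsumOn ((A.erase e₁).erase e₂) v y = y f) {p q : ℤ} (hp : p = 0 ∨ p = 1)
    (hq : q = 0 ∨ q = 1) (hpq : Even (p + q + u f)) :
    G.IsNetworkOn A (Function.update (Function.update u e₁ p) e₂ q) := by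
  set u' := Function.update (Function.update u e₁ p) e₂ q
  have hrest : ∀ e ∈ (A.erase e₁).erase e₂, u' e = u e := fun e he => by
    obtain ⟨h₂, h₁, -⟩ := by simpa using he
    simp [u', h₁, h₂]
  refine ⟨fun e => ?_, fun w hw => ?_⟩
  · simp only [u', Function.update_apply]
    split_ifs
    exacts [hq, hp, hu.1 e]
  by_cases hwv : w = v
  · subst hwv
    rw [hc.vsumOn_eq_add, hc.mult_left, hc.mult_right, hvf, hrest f hf]
    simpa [u', hc.ne] using hpq
  · obtain ⟨h₁, h₂⟩ := hc.mult_eq_zero w hwv hw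
    have hdeg := hc.degreeOn_eq_add w
    rw [hc.vsumOn_eq_add, h₁, h₂, vsumOn_congr hrest]
    simpa using hu.2 w (by omega)

end IsCherry

theorem exists_isNetworkOn_sum_eq_of_cycleRank_nonpos {d : ℕ} {x : G.E → ℤ}
    (A : Finset G.E) (hA : ∀ v, G.degreeOn A v ≤ 3) (hrank : G.cycleRank A ≤ 0)
    (hx : G.InConeOn A d x) :
    ∃ u : Fin d → G.E → ℤ, ∑ i, u i = x ∧ ∀ i, G.IsNetworkOn A (u i) := by
  induction A using Finset.strongInduction with
  | H A ih =>
  by_cases h3 : ∃ v₀, G.degreeOn A v₀ = 3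
  swap
  · choose p hp hpsum using fun e =>
      exists_zeroOne_sum_eq (ι := Fin d) (hx.1 e).1 (by simpa using (hx.1 e).2)
    exact ⟨fun i e => p e i, funext fun e => by simpa [Finset.sum_apply] using hpsum e,
      fun i => ⟨fun e => hp e i, fun v hv => (h3 ⟨v, hv⟩).elim⟩⟩
  obtain ⟨v₀, hv₀⟩ := h3
  obtain ⟨v, e₁, e₂, hc⟩ := exists_isCherry hrank hv₀
  obtain ⟨f, hf, hmf, hvf⟩ := hc.exists_stem
  obtain ⟨u, hu, hnet⟩ := ih _ hc.erase_ssubset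
    (fun w => by have := hc.degreeOn_eq_add w; have := hA w; omega)
    ((cycleRank_mono hc.erase_ssubset.subset).trans hrank) (hc.inConeOn_erase hA hx)
  have hxv : G.vsumOn A v x = x e₁ + x e₂ + ∑ i, u i f := by
    rw [hc.vsumOn_eq_add, hc.mult_left, hc.mult_right, hvf, ← hu]
    simp [Finset.sum_apply]
  obtain ⟨hev, htri, hle⟩ := hx.2 v hc.degreeOn_eq
  rw [hxv] at hev htri hle
  have h₁ := htri e₁ (by simp [hc.mult_left])
  have h₂ := htri e₂ (by simp [hc.mult_right])
  have hf' := htri f (by simp [hmf])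
  rw [← congrFun hu f, Finset.sum_apply] at hf'
  obtain ⟨p, q, hp, hq, hps, hqs, hpq⟩ := exists_tripod_completion (fun i => u i f)
    (fun i => (hnet i).1 f) hev (by omega) (by omega) (by omega) (by simpa using hle)
  refine ⟨fun i => Function.update (Function.update (u i) e₁ (p i)) e₂ (q i),
    funext fun e => ?_, fun i => hc.isNetworkOn_update (hnet i) hf hvf (hp i) (hq i) (hpq i)⟩
  simp only [Finset.sum_apply, Function.update_apply]
  split_ifs with h₂ h₁
  · rw [hqs, h₂]
  · rw [hps, h₁]
  · rw [← Finset.sum_apply, hu]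

end Forest

section FullGraph

variable {G : TGraph}

lemma components_eq_componentsOn_univ : G.components = G.componentsOn univ := by
  have : G.AdjOn univ =
      fun v w => ∃ e, (G.fst e = v ∧ G.snd e = w) ∨ (G.fst e = w ∧ G.snd e = v) := by
    ext; simp [AdjOn]
  rw [componentsOn, this, components]

lemma betti_eq_cycleRank_univ : G.betti = G.cycleRank univ := by
  simp [betti, cycleRank, components_eq_componentsOn_univ]
  ring

lemma Trivalent.not_isLeaf_iff (hG : G.Trivalent) {v : G.V} :
    ¬ G.IsLeaf v ↔ G.degree v = 3 := by
  rcases hG v with h | h <;> simp [IsLeaf, h]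

lemma Trivalent.degree_le (hG : G.Trivalent) (v : G.V) : G.degree v ≤ 3 := by
  rcases hG v with h | h <;> omega

lemma InCone.inConeOn_univ (hG : G.Trivalent) {d : ℕ} {x : G.E → ℤ} (hx : G.InCone (d, x))
    (hcap : ∀ e, x e ≤ d) : G.InConeOn univ d x :=
  ⟨fun e => ⟨hx.2.1 e, hcap e⟩, fun _ hv => hx.2.2 _ (hG.not_isLeaf_iff.mpr hv)⟩

lemma IsNetwork.inCone_one (hG : G.Trivalent) {u : G.E → ℤ} (hu : G.IsNetwork u) :
    G.InCone (1, u) := by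
  have h0 : ∀ e, 0 ≤ u e := fun e => by rcases hu.1 e with h | h <;> simp [h]
  refine ⟨zero_le_one, h0, fun v hv => ⟨hu.2 v hv, fun e he => ?_, ?_⟩⟩ <;>
    obtain ⟨k, hk⟩ := hu.2 v hv
  · change 2 * u e ≤ G.vsum v u
    have hle : (G.mult v e : ℤ) * u e ≤ G.vsum v u :=
      single_le_sum (fun e _ => mul_nonneg (Nat.cast_nonneg _) (h0 e)) (mem_univ e)
    have hm : (1 : ℤ) ≤ G.mult v e := by exact_mod_cast Nat.one_le_iff_ne_zero.mpr he
    rcases hu.1 e with h | h <;> rw [h] at hle ⊢ <;> simp only [mul_zero, mul_one] at hle <;>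
      omega
  · have hle : G.vsum v u ≤ G.degree v := by
      rw [vsum, degree, Nat.cast_sum]
      exact sum_le_sum fun e _ => by rcases hu.1 e with h | h <;> simp [h]
    rw [hG.not_isLeaf_iff.mp hv] at hle
    show G.vsum v u ≤ 2 * 1
    omega

lemma vsum_add (v : G.V) (y z : G.E → ℤ) : G.vsum v (y + z) = G.vsum v y + G.vsum v z := by
  simp [vsum, mul_add, sum_add_distrib]

lemma InCone.add {ω ω' : ℤ × (G.E → ℤ)} (h : G.InCone ω) (h' : G.InCone ω') :
    G.InCone (ω + ω') := by
  refine ⟨add_nonneg h.1 h'.1, fun e => add_nonneg (h.2.1 e) (h'.2.1 e), fun v hv => ?_⟩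
  obtain ⟨hev, htri, hle⟩ := h.2.2 v hv
  obtain ⟨hev', htri', hle'⟩ := h'.2.2 v hv
  simp only [Prod.fst_add, Prod.snd_add, vsum_add, Pi.add_apply]
  exact ⟨hev.add hev', fun e he => by linarith [htri e he, htri' e he], by linarith⟩

lemma InCone.snd_le_fst (hE : ∀ e, ¬ G.IsLeaf (G.fst e) ∨ ¬ G.IsLeaf (G.snd e))
    {ω : ℤ × (G.E → ℤ)} (hω : G.InCone ω) (e : G.E) : ω.2 e ≤ ω.1 := by
  obtain ⟨w, hw, hwe⟩ : ∃ w, ¬ G.IsLeaf w ∧ G.mult w e ≠ 0 := by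
    rcases hE e with h | h
    · exact ⟨_, h, mult_ne_zero_iff.mpr (Or.inl rfl)⟩
    · exact ⟨_, h, mult_ne_zero_iff.mpr (Or.inr rfl)⟩
  obtain ⟨-, htri, hle⟩ := hω.2.2 w hw
  linarith [htri e hwe]

theorem exists_isNetwork_sum_eq_of_betti_nonpos (hG : G.Trivalent) (hg : G.betti ≤ 0) {d : ℕ}
    {x : G.E → ℤ} (hx : G.InCone (d, x)) (hcap : ∀ e, x e ≤ d) :
    ∃ u : Fin d → G.E → ℤ, ∑ i, u i = x ∧ ∀ i, G.IsNetwork (u i) := by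
  obtain ⟨u, hu, hnet⟩ := exists_isNetworkOn_sum_eq_of_cycleRank_nonpos univ hG.degree_le
    (betti_eq_cycleRank_univ ▸ hg) (hx.inConeOn_univ hG hcap)
  exact ⟨u, hu, fun i => ⟨(hnet i).1, fun v hv => (hnet i).2 v (hG.not_isLeaf_iff.mp hv)⟩⟩

theorem mem_closure_degree_one_of_betti_nonpos (hG : G.Trivalent) (hg : G.betti ≤ 0) {d : ℕ}
    {x : G.E → ℤ} (hx : G.InCone (d, x)) (hcap : ∀ e, x e ≤ d) :
    ((d : ℤ), x) ∈ AddSubmonoid.closure {ω | G.InCone ω ∧ ω.1 = 1} := by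
  obtain ⟨u, hu, hnet⟩ := exists_isNetwork_sum_eq_of_betti_nonpos hG hg hx hcap
  have : ((d : ℤ), x) = ∑ i, ((1 : ℤ), u i) :=
    Prod.ext (by simp [Prod.fst_sum]) (by simp [Prod.snd_sum, hu])
  rw [this]
  exact AddSubmonoid.sum_mem _ fun i _ =>
    AddSubmonoid.subset_closure ⟨(hnet i).inCone_one hG, rfl⟩

end FullGraph

section Cut

variable (G : TGraph) (e₀ : G.E)

/-- `Sum.inl e₀` now runs from `G.fst e₀` to a new leaf `Sum.inr true`, and the new edge
`Sum.inr ()` runs from a new leaf `Sum.inr false` to `G.snd e₀`. -/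
abbrev cut : TGraph where
  V := G.V ⊕ Bool
  E := G.E ⊕ Unit
  fst := Sum.elim (fun e => Sum.inl (G.fst e)) fun _ => Sum.inr false
  snd := Sum.elim (fun e => if e = e₀ then Sum.inr true else Sum.inl (G.snd e))
    fun _ => Sum.inl (G.snd e₀)

def cutProj : (G.cut e₀).E → G.E := Sum.elim id fun _ => e₀

variable {G e₀}

lemma cut_mult_inl_inl_add (v : G.V) (e : G.E) :
    (G.cut e₀).mult (.inl v) (.inl e) +
      (if e = e₀ then (G.cut e₀).mult (.inl v) (.inr ()) else 0) = G.mult v e := by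
  unfold mult cut
  by_cases he : e = e₀
  · subst he; simp
  · simp [he]

lemma cut_sum_mult_inl (v : G.V) (g : G.E → ℤ) :
    ∑ ε, ((G.cut e₀).mult (.inl v) ε : ℤ) * g (G.cutProj e₀ ε) =
      ∑ e, (G.mult v e : ℤ) * g e := by
  simp_rw [← cut_mult_inl_inl_add (e₀ := e₀) v]
  simp [Fintype.sum_sum_type, cutProj, add_mul, sum_add_distrib]

lemma cut_vsum_inl (v : G.V) (x : G.E → ℤ) :
    (G.cut e₀).vsum (.inl v) (x ∘ G.cutProj e₀) = G.vsum v x :=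
  cut_sum_mult_inl v x

lemma cut_degree_inl (v : G.V) : (G.cut e₀).degree (.inl v) = G.degree v := by
  have := cut_sum_mult_inl (e₀ := e₀) v 1
  simp only [Pi.one_apply, mul_one] at this
  exact_mod_cast this

lemma cut_degree_inr (b : Bool) : (G.cut e₀).degree (.inr b) = 1 := by
  cases b <;> simp [degree, mult, cut, Fintype.sum_sum_type, ite_eq_iff]

lemma cut_isLeaf_inl {v : G.V} : (G.cut e₀).IsLeaf (.inl v) ↔ G.IsLeaf v := by
  simp only [IsLeaf, cut_degree_inl]

lemma cut_trivalent (hG : G.Trivalent) : (G.cut e₀).Trivalent := by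
  rintro (v | b)
  · rw [cut_degree_inl]; exact hG v
  · exact Or.inl (cut_degree_inr b)

lemma mult_cutProj_ne_zero {v : G.V} {ε : (G.cut e₀).E}
    (h : (G.cut e₀).mult (.inl v) ε ≠ 0) : G.mult v (G.cutProj e₀ ε) ≠ 0 := by
  rcases ε with e | u
  · have := cut_mult_inl_inl_add (e₀ := e₀) v e
    simp only [cutProj, Sum.elim_inl, id]
    omega
  · obtain rfl : u = () := rfl
    have := cut_mult_inl_inl_add (e₀ := e₀) v e₀
    simp only [cutProj, Sum.elim_inr, if_true] at this ⊢
    omega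

lemma exists_cut_mult_ne_zero {v : G.V} {e : G.E} (h : G.mult v e ≠ 0) :
    ∃ ε, G.cutProj e₀ ε = e ∧ (G.cut e₀).mult (.inl v) ε ≠ 0 := by
  have := cut_mult_inl_inl_add (e₀ := e₀) v e
  by_cases h' : (G.cut e₀).mult (.inl v) (.inl e) = 0
  · split_ifs at this with he
    · exact ⟨.inr (), he.symm, by omega⟩
    · omega
  · exact ⟨.inl e, rfl, h'⟩

lemma inCone_cut_iff {n : ℤ} {x : G.E → ℤ} :
    (G.cut e₀).InCone (n, x ∘ G.cutProj e₀) ↔ G.InCone (n, x) := by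
  constructor
  · rintro ⟨hn, hx, hv⟩
    refine ⟨hn, fun e => hx (.inl e), fun v hleaf => ?_⟩
    obtain ⟨hev, htri, hle⟩ := hv (.inl v) (cut_isLeaf_inl.not.mpr hleaf)
    rw [cut_vsum_inl] at hev htri hle
    refine ⟨hev, fun e he => ?_, hle⟩
    obtain ⟨ε, rfl, hε⟩ := exists_cut_mult_ne_zero (e₀ := e₀) he
    exact htri ε hε
  · rintro ⟨hn, hx, hv⟩
    refine ⟨hn, fun ε => hx _, ?_⟩
    rintro (v | b) hleaf
    · obtain ⟨hev, htri, hle⟩ := hv v (cut_isLeaf_inl.not.mp hleaf)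
      rw [cut_vsum_inl]
      exact ⟨hev, fun ε hε => htri _ (mult_cutProj_ne_zero hε), hle⟩
    · exact absurd (cut_degree_inr b) hleaf

lemma componentsOn_cut : (G.cut e₀).componentsOn univ = G.componentsOn (univ.erase e₀) := by
  let π : (G.cut e₀).V → G.V := Sum.elim id fun b => cond b (G.fst e₀) (G.snd e₀)
  refine Nat.card_congr ⟨Quot.lift (fun w => Quot.mk _ (π w)) ?_,
    Quot.lift (fun v => Quot.mk _ (.inl v)) ?_, fun c => ?_, fun c => ?_⟩
  · refine fun _ _ =>
      AdjOn.eq_of_forall (G := G.cut e₀) (fun w => Quot.mk _ (π w)) fun ε _ => ?_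
    rcases ε with e | ⟨⟩
    · by_cases he : e = e₀
      · subst he; simp [π]
      · exact Quot.sound ⟨e, by simp [he], Or.inl ⟨rfl, by simp [π, he]⟩⟩
    · rfl
  · refine fun _ _ => AdjOn.eq_of_forall (G := G)
      (fun v => Quot.mk ((G.cut e₀).AdjOn univ) (Sum.inl v)) fun e he =>
      Quot.sound ⟨.inl e, mem_univ _, ?_⟩
    simp [cut, (mem_erase.mp he).1]
  · induction c using Quot.ind with
    | _ w =>
      rcases w with v | (_ | _)
      · rfl
      · exact Quot.sound ⟨.inr (), mem_univ _, Or.inr ⟨rfl, rfl⟩⟩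
      · exact Quot.sound ⟨.inl e₀, mem_univ _, Or.inl ⟨rfl, by simp [cut]⟩⟩
  · induction c using Quot.ind; rfl

lemma betti_cut (h : G.componentsOn (univ.erase e₀) = G.componentsOn univ) :
    (G.cut e₀).betti = G.betti - 1 := by
  rw [betti_eq_cycleRank_univ, betti_eq_cycleRank_univ, cycleRank, cycleRank, componentsOn_cut,
    h]
  simp [cut, Fintype.card_sum]
  ring

lemma inCone_of_cut {ω : ℤ × ((G.cut e₀).E → ℤ)} (h : (G.cut e₀).InCone ω)
    (hω : ω.2 (.inl e₀) = ω.2 (.inr ())) : G.InCone (ω.1, ω.2 ∘ Sum.inl) := by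
  refine (inCone_cut_iff (e₀ := e₀)).mp ?_
  convert h using 2
  funext ε
  rcases ε with e | ⟨⟩
  exacts [rfl, hω]

end Cut

variable {G : TGraph}

theorem mem_closure_of_betti_eq_one (hG : G.Trivalent) (hg : G.betti = 1) {d : ℕ}
    {x : G.E → ℤ} (hx : G.InCone (d, x)) (hcap : ∀ e, x e ≤ d) :
    ((d : ℤ), x) ∈ AddSubmonoid.closure {ω | G.InCone ω ∧ (ω.1 = 1 ∨ ω.1 = 2)} := by
  obtain ⟨e₀, -, he₀⟩ := exists_componentsOn_erase_eq (G := G) (A := univ)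
    (by rw [← betti_eq_cycleRank_univ, hg]; exact one_pos)
  have hG' := cut_trivalent (e₀ := e₀) hG
  obtain ⟨u, hu, hnet⟩ :=
    exists_isNetwork_sum_eq_of_betti_nonpos hG' (by rw [betti_cut he₀, hg]; rfl)
    (inCone_cut_iff.mpr hx) fun _ => hcap _
  have hsum : ((d : ℤ), x) = ∑ i, ((1 : ℤ), u i ∘ Sum.inl) := by
    refine Prod.ext (by simp [Prod.fst_sum]) (funext fun e => ?_)
    rw [Prod.snd_sum, Finset.sum_apply]
    change x e = ∑ i, u i (.inl e)
    rw [← Finset.sum_apply, hu]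
    rfl
  rw [hsum]
  -- pieces whose halves of `e₀` agree descend to `G`; the others are paired up
  refine AddSubmonoid.sum_mem_of_balanced _ (fun i => u i (.inl e₀) - u i (.inr ()))
    (fun i => ?_) (fun i hi => ?_) (fun i j hij => ?_) univ ?_
  · rcases (hnet i).1 (.inl e₀) with h | h <;> rcases (hnet i).1 (.inr ()) with h' | h' <;>
      simp [h, h']
  · exact AddSubmonoid.subset_closure
      ⟨inCone_of_cut ((hnet i).inCone_one hG') (by dsimp only at hi ⊢; omega), Or.inl rfl⟩
  · refine AddSubmonoid.subset_closure ⟨inCone_of_cut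
      (((hnet i).inCone_one hG').add ((hnet j).inCone_one hG')) ?_, Or.inr rfl⟩
    simp only [Prod.snd_add, Pi.add_apply] at hij ⊢
    omega
  · rw [sum_sub_distrib, ← Finset.sum_apply, ← Finset.sum_apply, hu]
    simp [cutProj]

end TGraph

/-- For a trivalent graph with first Betti number at most one, the
graded semigroup `τ(G)` is generated by its elements of degree 1 and 2. (We
assume each edge has at least one inner endpoint, as is the case for graphs
assembled from tripods.) -/
theorem cone_generated_in_degrees_one_and_two (G : TGraph) (hG : G.Trivalent)
    (hE : ∀ e, ¬ G.IsLeaf (G.fst e) ∨ ¬ G.IsLeaf (G.snd e))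
    (hg : G.betti ≤ 1) (ω : ℤ × (G.E → ℤ)) (hω : G.InCone ω) :
    ω ∈ AddSubmonoid.closure
      {ω' : ℤ × (G.E → ℤ) | G.InCone ω' ∧ (ω'.1 = 1 ∨ ω'.1 = 2)} := by
  obtain ⟨n, x⟩ := ω
  lift n to ℕ using hω.1
  have hcap : ∀ e, x e ≤ n := hω.snd_le_fst hE
  rcases (show G.betti ≤ 0 ∨ G.betti = 1 by omega) with hforest | hcycle
  · exact AddSubmonoid.closure_mono (Set.ofPred_subset_ofPred.mpr fun _ h => ⟨h.1, Or.inl h.2⟩)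
      (G.mem_closure_degree_one_of_betti_nonpos hG hforest hω hcap)
  · exact G.mem_closure_of_betti_eq_one hG hcycle hω hcap
end

section
/- Let G be a trivalent tree (connected trivalent graph with no cycles). Then the graded semigroup τ(G) is generated by its degree-1 elements, which are exactly the networks; moreover, a network in a tree is uniquely determined by its restriction to the leaves, and the set of generators is in bijection with the sequences in {0,1}^n having an even number of 1's, where n is the number of leaves. -/
def valFun {E V : Type} [DecidableEq V] (φ : V → ℕ) (top : E → V) (ρ : V)
    (a0 : E → Bool) (ch : V → Bool → E → Bool) (par : V → E)
    (hdec : ∀ e : E, top e ≠ ρ → φ (top (par (top e))) < φ (top e)) (e : E) : Bool :=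
  if h : top e = ρ then a0 e
  else ch (top e) (valFun φ top ρ a0 ch par hdec (par (top e))) e
termination_by φ (top e)
decreasing_by exact hdec e h

namespace TCAux

open Finset Module Matrix

variable (G : TGraph)

/-- The (mod 2) incidence matrix. -/
def Amat : Matrix G.V G.E (ZMod 2) := fun v e => ((G.mult v e : ℕ) : ZMod 2)

lemma zmod2_cases (x : ZMod 2) : x = 0 ∨ x = 1 := by revert x; decide

lemma zmod2_add_eq_zero (a b : ZMod 2) : a + b = 0 ↔ a = b := by revert a b; decide

lemma mulVec_Amat (x : G.E → ZMod 2) (v : G.V) :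
    (Amat G *ᵥ x) v = ∑ e, ((G.mult v e : ℕ) : ZMod 2) * x e := rfl

lemma cast_vsum (u : G.E → ℤ) (v : G.V) :
    ((G.vsum v u : ℤ) : ZMod 2) = (Amat G *ᵥ fun e => ((u e : ℤ) : ZMod 2)) v := by
  rw [mulVec_Amat, TGraph.vsum]
  push_cast
  rfl

lemma mulVec_AmatT (z : G.V → ZMod 2) (e : G.E) :
    ((Amat G)ᵀ *ᵥ z) e = z (G.fst e) + z (G.snd e) := by
  show ∑ v, (Amat G)ᵀ e v * z v = _
  have : ∀ v, (Amat G)ᵀ e v * z v =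
      (if G.fst e = v then z v else 0) + (if G.snd e = v then z v else 0) := by
    intro v
    simp only [Matrix.transpose_apply, Amat, TGraph.mult]
    push_cast
    rcases eq_or_ne (G.fst e) v with h1 | h1 <;> rcases eq_or_ne (G.snd e) v with h2 | h2 <;>
      simp [h1, h2] <;> ring
  rw [Finset.sum_congr rfl fun v _ => this v, Finset.sum_add_distrib]
  rw [Finset.sum_ite_eq (Finset.univ : Finset G.V) (G.fst e) z,
    Finset.sum_ite_eq (Finset.univ : Finset G.V) (G.snd e) z]
  simp

/-- connectivity: functions respecting edges are constant -/
lemma const_of_edges (hc : G.components = 1) {M : Type*} (z : G.V → M)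
    (hz : ∀ e, z (G.fst e) = z (G.snd e)) (v w : G.V) : z v = z w := by
  unfold TGraph.components at hc
  set r : G.V → G.V → Prop := fun v w : G.V =>
    ∃ e, (G.fst e = v ∧ G.snd e = w) ∨ (G.fst e = w ∧ G.snd e = v) with hr
  have hsub : Subsingleton (Quot r) := (Nat.card_eq_one_iff_unique.mp hc).1
  have hlift : ∀ a b : G.V, r a b → z a = z b := by
    rintro a b ⟨e, he⟩
    rcases he with ⟨h1, h2⟩ | ⟨h1, h2⟩
    · rw [← h1, ← h2]; exact hz e
    · rw [← h1, ← h2]; exact (hz e).symm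
  have : ∀ a : G.V, z a = Quot.lift z hlift (Quot.mk r a) := fun a => rfl
  rw [this v, this w, Subsingleton.elim (Quot.mk r v) (Quot.mk r w)]

lemma nonempty_V (hc : G.components = 1) : Nonempty G.V := by
  unfold TGraph.components at hc
  have := (Nat.card_eq_one_iff_unique.mp hc).2
  obtain ⟨q⟩ := this
  obtain ⟨v, -⟩ := q.exists_rep
  exact ⟨v⟩

lemma cardE (hc : G.components = 1) (hg : G.betti = 0) :
    Fintype.card G.E + 1 = Fintype.card G.V := by
  unfold TGraph.betti at hg
  rw [hc] at hg
  omega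

instance : Fact (Nat.Prime 2) := ⟨Nat.prime_two⟩

lemma ker_AT (hc : G.components = 1) :
    LinearMap.ker (Amat G)ᵀ.mulVecLin
      = Submodule.span (ZMod 2) {(fun _ => 1 : G.V → ZMod 2)} := by
  apply le_antisymm
  · intro z hz
    rw [LinearMap.mem_ker] at hz
    have hz' : ∀ e, z (G.fst e) = z (G.snd e) := by
      intro e
      have h0 : ((Amat G)ᵀ *ᵥ z) e = 0 := by
        rw [show (Amat G)ᵀ *ᵥ z = 0 from hz]; rfl
      rw [mulVec_AmatT] at h0
      exact (zmod2_add_eq_zero _ _).mp h0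
    obtain ⟨v0⟩ := nonempty_V G hc
    have hconst := const_of_edges G hc z hz'
    have hzeq : z = z v0 • (fun _ => 1 : G.V → ZMod 2) := by
      funext w; simp [hconst w v0]
    rw [hzeq]
    exact Submodule.smul_mem _ _ (Submodule.mem_span_singleton_self _)
  · rw [Submodule.span_le, Set.singleton_subset_iff]
    rw [SetLike.mem_coe, LinearMap.mem_ker]
    funext e
    show ((Amat G)ᵀ *ᵥ fun _ => 1) e = 0
    rw [mulVec_AmatT]
    decide

lemma finrank_kerAT (hc : G.components = 1) :
    finrank (ZMod 2) (LinearMap.ker (Amat G)ᵀ.mulVecLin) = 1 := by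
  rw [ker_AT G hc]
  have h1 : (fun _ => 1 : G.V → ZMod 2) ≠ 0 := by
    obtain ⟨v0⟩ := nonempty_V G hc
    intro h; exact one_ne_zero (congrFun h v0)
  exact finrank_span_singleton h1

lemma rank_A (hc : G.components = 1) (hg : G.betti = 0) :
    (Amat G).rank = Fintype.card G.E := by
  have h1 := LinearMap.finrank_range_add_finrank_ker ((Amat G)ᵀ.mulVecLin)
  rw [finrank_kerAT G hc, Module.finrank_pi] at h1
  have h2 : (Amat G)ᵀ.rank = (Amat G).rank := Matrix.rank_transpose _
  have h3 := cardE G hc hg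
  have h4 : (Amat G)ᵀ.rank
      = finrank (ZMod 2) (LinearMap.range (Amat G)ᵀ.mulVecLin) := rfl
  omega

lemma ker_A (hc : G.components = 1) (hg : G.betti = 0) :
    LinearMap.ker (Amat G).mulVecLin = ⊥ := by
  have h1 := LinearMap.finrank_range_add_finrank_ker ((Amat G).mulVecLin)
  rw [Module.finrank_pi] at h1
  have h2 := rank_A G hc hg
  have h4 : (Amat G).rank
      = finrank (ZMod 2) (LinearMap.range (Amat G).mulVecLin) := rfl
  have h5 : finrank (ZMod 2) (LinearMap.ker (Amat G).mulVecLin) = 0 := by omega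
  exact Submodule.finrank_eq_zero.mp h5

lemma Psi_surj (hc : G.components = 1) (hg : G.betti = 0) (y : G.E → ZMod 2) :
    ∃ z, (Amat G)ᵀ *ᵥ z = y := by
  have h1 := LinearMap.finrank_range_add_finrank_ker ((Amat G)ᵀ.mulVecLin)
  rw [finrank_kerAT G hc, Module.finrank_pi] at h1
  have h2 : (Amat G)ᵀ.rank = (Amat G).rank := Matrix.rank_transpose _
  have h3 := cardE G hc hg
  have h2' := rank_A G hc hg
  have h4 : (Amat G)ᵀ.rank
      = finrank (ZMod 2) (LinearMap.range (Amat G)ᵀ.mulVecLin) := rfl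
  have htop : LinearMap.range (Amat G)ᵀ.mulVecLin = ⊤ := by
    apply Submodule.eq_top_of_finrank_eq
    rw [Module.finrank_pi]
    omega
  have := LinearMap.range_eq_top.mp htop y
  obtain ⟨z, hz⟩ := this
  exact ⟨z, hz⟩

lemma sum_mult (e : G.E) : ∑ v, G.mult v e = 2 := by
  unfold TGraph.mult
  rw [Finset.sum_add_distrib]
  rw [Finset.sum_ite_eq (Finset.univ : Finset G.V) (G.fst e) (fun _ => 1),
    Finset.sum_ite_eq (Finset.univ : Finset G.V) (G.snd e) (fun _ => 1)]
  simp

/-- The sum-of-coordinates functional. -/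
def sumF : (G.V → ZMod 2) →ₗ[ZMod 2] ZMod 2 where
  toFun := fun y => ∑ v, y v
  map_add' := by intros; simp [Finset.sum_add_distrib]
  map_smul' := by intros; simp [Finset.mul_sum]

lemma range_A (hc : G.components = 1) (hg : G.betti = 0) :
    LinearMap.range (Amat G).mulVecLin = LinearMap.ker (sumF G) := by
  have hle : LinearMap.range (Amat G).mulVecLin ≤ LinearMap.ker (sumF G) := by
    rintro y ⟨x, rfl⟩
    rw [LinearMap.mem_ker]
    show ∑ v, (Amat G *ᵥ x) v = 0
    have : ∀ v, (Amat G *ᵥ x) v = ∑ e, ((G.mult v e : ℕ) : ZMod 2) * x e :=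
      mulVec_Amat G x
    rw [Finset.sum_congr rfl fun v _ => this v, Finset.sum_comm]
    apply Finset.sum_eq_zero
    intro e _
    rw [← Finset.sum_mul, ← Nat.cast_sum, sum_mult G e]
    show (2 : ZMod 2) * x e = 0
    rw [show (2 : ZMod 2) = 0 by decide, zero_mul]
  obtain ⟨v0⟩ := nonempty_V G hc
  have hsurj : LinearMap.range (sumF G) = ⊤ := by
    rw [LinearMap.range_eq_top]
    intro c
    refine ⟨fun v => if v = v0 then c else 0, ?_⟩
    show ∑ v, (if v = v0 then c else 0) = c
    rw [Finset.sum_ite_eq' (Finset.univ : Finset G.V) v0 (fun _ => c)]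
    simp
  have h1 := LinearMap.finrank_range_add_finrank_ker (sumF G)
  rw [hsurj, finrank_top, Module.finrank_pi, Module.finrank_self] at h1
  have h2 := rank_A G hc hg
  have h3 := cardE G hc hg
  have h4 : (Amat G).rank
      = finrank (ZMod 2) (LinearMap.range (Amat G).mulVecLin) := rfl
  apply Submodule.eq_of_le_of_finrank_le hle
  omega

lemma no_loops (hc : G.components = 1) (hg : G.betti = 0) (e : G.E) :
    G.fst e ≠ G.snd e := by
  intro hloop
  have hker := ker_A G hc hg
  have hxmem : (Pi.single e 1 : G.E → ZMod 2) ∈ LinearMap.ker (Amat G).mulVecLin := by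
    rw [LinearMap.mem_ker]
    funext v
    show (Amat G *ᵥ Pi.single e 1) v = 0
    rw [Matrix.mulVec_single]
    show Amat G v e * 1 = 0
    rw [mul_one]
    unfold Amat TGraph.mult
    rcases eq_or_ne (G.fst e) v with h | h
    · rw [if_pos h, if_pos (hloop ▸ h)]; decide
    · rw [if_neg h, if_neg (fun h2 => h (hloop ▸ h2))]; decide
  rw [hker, Submodule.mem_bot] at hxmem
  have := congrFun hxmem e
  rw [Pi.single_eq_same] at this
  exact one_ne_zero this

/-- The set of edges incident to `v`. -/
def Inc (v : G.V) : Finset G.E := Finset.univ.filter (fun e => G.mult v e ≠ 0)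

lemma mem_Inc {v : G.V} {e : G.E} : e ∈ Inc G v ↔ G.mult v e ≠ 0 := by
  simp [Inc]

lemma inc_of_endpoint {v : G.V} {e : G.E} (h : G.fst e = v ∨ G.snd e = v) :
    G.mult v e ≠ 0 := by
  unfold TGraph.mult
  rcases h with h | h
  · rw [if_pos h]; omega
  · rw [if_pos h]; omega

lemma endpoint_of_inc {v : G.V} {e : G.E} (h : G.mult v e ≠ 0) :
    G.fst e = v ∨ G.snd e = v := by
  by_contra hcon
  push_neg at hcon
  apply h
  unfold TGraph.mult
  rw [if_neg hcon.1, if_neg hcon.2]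

lemma mult01 (hc : G.components = 1) (hg : G.betti = 0) (v : G.V) (e : G.E) :
    G.mult v e = 0 ∨ G.mult v e = 1 := by
  have hnl := no_loops G hc hg e
  unfold TGraph.mult
  rcases eq_or_ne (G.fst e) v with h1 | h1 <;> rcases eq_or_ne (G.snd e) v with h2 | h2
  · exact absurd (h1.trans h2.symm) hnl
  · rw [if_pos h1, if_neg h2]; omega
  · rw [if_neg h1, if_pos h2]; omega
  · rw [if_neg h1, if_neg h2]; omega

lemma vsum_eq (hc : G.components = 1) (hg : G.betti = 0) (v : G.V) (u : G.E → ℤ) :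
    G.vsum v u = ∑ e ∈ Inc G v, u e := by
  unfold TGraph.vsum Inc
  rw [Finset.sum_filter]
  apply Finset.sum_congr rfl
  intro e _
  rcases mult01 G hc hg v e with h | h <;> rw [h] <;> simp

lemma card_Inc (hc : G.components = 1) (hg : G.betti = 0) (v : G.V) :
    (Inc G v).card = G.degree v := by
  unfold TGraph.degree Inc
  rw [Finset.card_filter]
  apply Finset.sum_congr rfl
  intro e _
  rcases mult01 G hc hg v e with h | h <;> rw [h] <;> simp

lemma vsum_sub (v : G.V) (a b : G.E → ℤ) :
    G.vsum v (fun e => a e - b e) = G.vsum v a - G.vsum v b := by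
  unfold TGraph.vsum
  rw [← Finset.sum_sub_distrib]
  apply Finset.sum_congr rfl
  intro e _
  ring

lemma cast_even {n : ℤ} (h : Even n) : ((n : ℤ) : ZMod 2) = 0 := by
  obtain ⟨k, rfl⟩ := h
  push_cast
  exact (zmod2_add_eq_zero _ _).mpr rfl

/-- Statement 3: networks give degree-one cone elements. -/
lemma net_cone (hG : G.Trivalent) (hc : G.components = 1) (hg : G.betti = 0)
    (u : G.E → ℤ) (hu : G.IsNetwork u) : G.InCone (1, u) := by
  have hnn : ∀ e, (0:ℤ) ≤ u e := fun e => by rcases hu.1 e with h | h <;> omega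
  refine ⟨by norm_num, hnn, ?_⟩
  intro v hv
  have hdeg : G.degree v = 3 := (hG v).resolve_left hv
  have hcard : (Inc G v).card = 3 := by rw [card_Inc G hc hg, hdeg]
  have hvs := vsum_eq G hc hg v u
  have hub : G.vsum v u ≤ 3 := by
    rw [hvs]
    calc ∑ e ∈ Inc G v, u e ≤ ∑ _e ∈ Inc G v, (1 : ℤ) :=
          Finset.sum_le_sum (fun e _ => by rcases hu.1 e with h | h <;> omega)
      _ = 3 := by rw [Finset.sum_const, hcard]; norm_num
  have hlb : 0 ≤ G.vsum v u := by
    rw [hvs]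
    exact Finset.sum_nonneg (fun e _ => hnn e)
  obtain ⟨k, hk⟩ := hu.2 v hv
  refine ⟨⟨k, hk⟩, ?_, ?_⟩
  · intro e he
    show 2 * u e ≤ G.vsum v u
    rcases hu.1 e with h | h
    · rw [h]; omega
    · have h1 : u e ≤ ∑ e' ∈ Inc G v, u e' :=
        Finset.single_le_sum (fun e' _ => hnn e') (mem_Inc G |>.mpr he)
      rw [← hvs] at h1
      omega
  · show G.vsum v u ≤ 2 * 1
    omega

/-- Statement 2: degree-one cone elements are networks. -/
lemma cone_deg1_net (hE : ∀ e, ¬ G.IsLeaf (G.fst e) ∨ ¬ G.IsLeaf (G.snd e))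
    (ω : ℤ × (G.E → ℤ)) (hω : G.InCone ω) (h1 : ω.1 = 1) : G.IsNetwork ω.2 := by
  refine ⟨?_, fun v hv => (hω.2.2 v hv).1⟩
  intro e
  have hnn := hω.2.1 e
  rcases hE e with hv | hv
  · have hm : G.mult (G.fst e) e ≠ 0 := inc_of_endpoint G (Or.inl rfl)
    have h2 := hω.2.2 (G.fst e) hv
    have h3 := h2.2.1 e hm
    have h4 := h2.2.2
    rw [h1] at h4
    omega
  · have hm : G.mult (G.snd e) e ≠ 0 := inc_of_endpoint G (Or.inr rfl)
    have h2 := hω.2.2 (G.snd e) hv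
    have h3 := h2.2.1 e hm
    have h4 := h2.2.2
    rw [h1] at h4
    omega

/-- a network is determined by its leaf values. -/
lemma networks_eq (hc : G.components = 1) (hg : G.betti = 0)
    (u w : G.E → ℤ) (hu : G.IsNetwork u) (hw : G.IsNetwork w)
    (hl : ∀ v, G.IsLeaf v → G.vsum v u = G.vsum v w) : u = w := by
  have hx : (fun e => ((u e - w e : ℤ) : ZMod 2)) ∈ LinearMap.ker (Amat G).mulVecLin := by
    rw [LinearMap.mem_ker]
    funext v
    show (Amat G *ᵥ fun e => ((u e - w e : ℤ) : ZMod 2)) v = 0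
    rw [← cast_vsum G (fun e => u e - w e) v, vsum_sub]
    by_cases hv : G.IsLeaf v
    · rw [hl v hv, sub_self]; rfl
    · exact cast_even ((hu.2 v hv).sub (hw.2 v hv))
  rw [ker_A G hc hg, Submodule.mem_bot] at hx
  funext e
  have h0 := congrFun hx e
  rw [show (0 : G.E → ZMod 2) e = 0 from rfl] at h0
  rw [ZMod.intCast_zmod_eq_zero_iff_dvd] at h0
  rcases hu.1 e with h1 | h1 <;> rcases hw.1 e with h2 | h2 <;> omega

/-- networks with prescribed leaf values exist. -/
lemma networks_exist (hc : G.components = 1) (hg : G.betti = 0)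
    (f : {v : G.V // G.IsLeaf v} → ℤ) (hf : ∀ l, f l = 0 ∨ f l = 1)
    (hev : Even (∑ l, f l)) :
    ∃ u : G.E → ℤ, G.IsNetwork u ∧ ∀ l : {v : G.V // G.IsLeaf v}, G.vsum l.1 u = f l := by
  classical
  set y : G.V → ZMod 2 := fun v => if h : G.IsLeaf v then ((f ⟨v, h⟩ : ℤ) : ZMod 2) else 0
    with hy_def
  have hy : y ∈ LinearMap.ker (sumF G) := by
    rw [LinearMap.mem_ker]
    show ∑ v, y v = 0
    have h1 : ∑ v, y v = ∑ l : {v : G.V // G.IsLeaf v}, ((f l : ℤ) : ZMod 2) := by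
      rw [← Finset.sum_filter_of_ne (p := fun v => G.IsLeaf v)
        (fun v _ hv => by by_contra hcon; exact hv (by simp [hy_def, hcon]))]
      rw [Finset.sum_subtype (p := fun v => G.IsLeaf v)
        (Finset.univ.filter (fun v => G.IsLeaf v)) (by intro x; simp) (fun v => y v)]
      apply Finset.sum_congr rfl
      intro l _
      simp [hy_def, l.2]
    rw [h1, ← Int.cast_sum]
    exact cast_even hev
  rw [← range_A G hc hg] at hy
  obtain ⟨x, hx⟩ := hy
  set u : G.E → ℤ := fun e => if x e = 0 then 0 else 1 with hu_def
  have hux : ∀ e, ((u e : ℤ) : ZMod 2) = x e := by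
    intro e
    rcases zmod2_cases (x e) with h | h <;> simp [hu_def, h]
  have hcast : ∀ v, ((G.vsum v u : ℤ) : ZMod 2) = y v := by
    intro v
    rw [cast_vsum G u v]
    have : (fun e => ((u e : ℤ) : ZMod 2)) = x := funext hux
    rw [this]
    exact congrFun hx v
  have hu01 : ∀ e, u e = 0 ∨ u e = 1 := by
    intro e; rcases zmod2_cases (x e) with h | h <;> simp [hu_def, h]
  refine ⟨u, ⟨hu01, ?_⟩, ?_⟩
  · intro v hv
    have h0 : ((G.vsum v u : ℤ) : ZMod 2) = 0 := by
      rw [hcast v]; simp [hy_def, hv]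
    rw [ZMod.intCast_zmod_eq_zero_iff_dvd] at h0
    obtain ⟨k, hk⟩ := h0
    exact ⟨k, by omega⟩
  · rintro ⟨v, hv⟩
    have hdeg : G.degree v = 1 := hv
    have hcard : (Inc G v).card = 1 := by rw [card_Inc G hc hg, hdeg]
    obtain ⟨e0, he0⟩ := Finset.card_eq_one.mp hcard
    have hvs : G.vsum v u = u e0 := by
      rw [vsum_eq G hc hg, he0, Finset.sum_singleton]
    have h0 : ((G.vsum v u - f ⟨v, hv⟩ : ℤ) : ZMod 2) = 0 := by
      push_cast
      rw [hcast v]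
      simp [hy_def, hv]
    rw [ZMod.intCast_zmod_eq_zero_iff_dvd] at h0
    rcases hu01 e0 with h1 | h1 <;> rcases hf ⟨v, hv⟩ with h2 | h2 <;>
      rw [hvs] <;> rw [h1] at hvs <;> omega

lemma exists_leaf (hG : G.Trivalent) (hc : G.components = 1) (hg : G.betti = 0) :
    ∃ ρ, G.IsLeaf ρ := by
  by_contra hcon
  push_neg at hcon
  have hall : ∀ v, G.degree v = 3 := fun v => (hG v).resolve_left (hcon v)
  have h1 : ∑ v, G.degree v = 3 * Fintype.card G.V := by
    rw [Finset.sum_congr rfl fun v _ => hall v, Finset.sum_const, Finset.card_univ,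
      smul_eq_mul, mul_comm]
  have h2 : ∑ v, G.degree v = 2 * Fintype.card G.E := by
    unfold TGraph.degree
    rw [Finset.sum_comm, Finset.sum_congr rfl fun e _ => sum_mult G e, Finset.sum_const,
      Finset.card_univ, smul_eq_mul, mul_comm]
  have h3 := cardE G hc hg
  have h4 : 1 ≤ Fintype.card G.V := Fintype.card_pos_iff.mpr (nonempty_V G hc)
  omega

lemma nonempty_E (hG : G.Trivalent) (hc : G.components = 1) (hg : G.betti = 0) :
    Nonempty G.E := by
  by_contra hcon
  have hemp : Fintype.card G.E = 0 := by
    rw [Fintype.card_eq_zero_iff]; exact ⟨fun e => absurd ⟨e⟩ hcon⟩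
  obtain ⟨v⟩ := nonempty_V G hc
  have hdeg : G.degree v = 0 := by
    unfold TGraph.degree
    rw [Finset.sum_eq_zero]
    intro e _
    exact absurd ⟨e⟩ hcon
  rcases hG v with h | h <;> omega

lemma tree_struct (hG : G.Trivalent) (hc : G.components = 1) (hg : G.betti = 0) :
    ∃ (ρ : G.V) (top bot : G.E → G.V) (par : G.V → G.E) (φ : G.V → ℕ),
      G.IsLeaf ρ ∧
      (∀ e, (top e = G.fst e ∧ bot e = G.snd e) ∨ (top e = G.snd e ∧ bot e = G.fst e)) ∧
      (∀ e, top e ≠ bot e) ∧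
      (∀ e, bot e ≠ ρ) ∧
      (∀ e, φ (bot e) = φ (top e) + 1) ∧
      (∀ w, w ≠ ρ → G.mult w (par w) ≠ 0 ∧ bot (par w) = w) ∧
      (∀ w e, G.mult w e ≠ 0 → bot e = w → e = par w) ∧
      (∀ e, top e ≠ ρ → ¬ G.IsLeaf (top e)) := by
  classical
  obtain ⟨ρ, hρ⟩ := exists_leaf G hG hc hg
  obtain ⟨edef⟩ := nonempty_E G hG hc hg
  -- cut functions
  have hz : ∀ e : G.E, ∃ zf : G.V → ZMod 2,
      (∀ e', zf (G.fst e') + zf (G.snd e') = if e' = e then 1 else 0) ∧ zf ρ = 0 := by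
    intro e
    obtain ⟨z0, hz0⟩ := Psi_surj G hc hg (Pi.single e 1)
    refine ⟨fun v => z0 v + z0 ρ, ?_, (zmod2_add_eq_zero _ _).mpr rfl⟩
    intro e'
    have h1 := congrFun hz0 e'
    rw [mulVec_AmatT] at h1
    have h2 : (z0 (G.fst e') + z0 ρ) + (z0 (G.snd e') + z0 ρ)
        = z0 (G.fst e') + z0 (G.snd e') + (z0 ρ + z0 ρ) := by ring
    rw [h2, (zmod2_add_eq_zero (z0 ρ) (z0 ρ)).mpr rfl, add_zero, h1, Pi.single_apply]
  choose z hz1 hz2 using hz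
  have hend : ∀ e, (z e (G.fst e) = 0 ∧ z e (G.snd e) = 1)
      ∨ (z e (G.fst e) = 1 ∧ z e (G.snd e) = 0) := by
    intro e
    have h0 := hz1 e e
    rw [if_pos rfl] at h0
    rcases zmod2_cases (z e (G.fst e)) with h1 | h1 <;>
      rcases zmod2_cases (z e (G.snd e)) with h2 | h2
    · exfalso; rw [h1, h2] at h0; exact absurd h0 (by decide)
    · exact Or.inl ⟨h1, h2⟩
    · exact Or.inr ⟨h1, h2⟩
    · exfalso; rw [h1, h2] at h0; exact absurd h0 (by decide)
  have hconst2 : ∀ e e', e' ≠ e → z e (G.fst e') = z e (G.snd e') := by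
    intro e e' hne
    have h0 := hz1 e e'
    rw [if_neg hne] at h0
    exact (zmod2_add_eq_zero _ _).mp h0
  set top : G.E → G.V := fun e => if z e (G.fst e) = 0 then G.fst e else G.snd e with htop
  set bot : G.E → G.V := fun e => if z e (G.fst e) = 0 then G.snd e else G.fst e with hbot
  have htb : ∀ e, (top e = G.fst e ∧ bot e = G.snd e)
      ∨ (top e = G.snd e ∧ bot e = G.fst e) := by
    intro e
    by_cases h : z e (G.fst e) = 0
    · left; constructor <;> simp [htop, hbot, h]
    · right; constructor <;> simp [htop, hbot, h]
  have hztop : ∀ e, z e (top e) = 0 := by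
    intro e
    rcases hend e with ⟨h1, h2⟩ | ⟨h1, h2⟩
    · simp [htop, h1]
    · simp [htop, h1, h2]
  have hzbot : ∀ e, z e (bot e) = 1 := by
    intro e
    rcases hend e with ⟨h1, h2⟩ | ⟨h1, h2⟩
    · simp [hbot, h1, h2]
    · simp [hbot, h1]
  have hne_tb : ∀ e, top e ≠ bot e := by
    intro e h
    have h1 := hztop e
    rw [h, hzbot e] at h1
    exact one_ne_zero h1
  have hbotρ : ∀ e, bot e ≠ ρ := by
    intro e h
    have h1 := hzbot e
    rw [h, hz2 e] at h1
    exact one_ne_zero h1.symm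
  have hzconst : ∀ e e', e' ≠ e → z e' (top e) = z e' (bot e) := by
    intro e e' hne
    have h0 := hconst2 e' e (Ne.symm hne)
    rcases htb e with ⟨h1, h2⟩ | ⟨h1, h2⟩
    · rw [h1, h2]; exact h0
    · rw [h1, h2]; exact h0.symm
  set φ : G.V → ℕ := fun v => (Finset.univ.filter (fun e => z e v = 1)).card with hφ
  have hφ_step : ∀ e, φ (bot e) = φ (top e) + 1 := by
    intro e
    have hset : Finset.univ.filter (fun e' => z e' (bot e) = 1)
        = insert e (Finset.univ.filter (fun e' => z e' (top e) = 1)) := by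
      ext e'
      simp only [Finset.mem_filter, Finset.mem_insert, Finset.mem_univ, true_and]
      rcases eq_or_ne e' e with rfl | hne
      · simp [hzbot e']
      · rw [← hzconst e e' hne]
        simp [hne]
    show (Finset.univ.filter (fun e' => z e' (bot e) = 1)).card
      = (Finset.univ.filter (fun e' => z e' (top e) = 1)).card + 1
    rw [hset, Finset.card_insert_of_notMem]
    simp only [Finset.mem_filter, Finset.mem_univ, true_and]
    rw [hztop e]
    exact fun h => one_ne_zero h.symm
  -- the incidence identity
  have hA : ∀ w : G.V, Amat G *ᵥ (fun e => z e w)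
      = fun v => (if v = w then 1 else 0) + (if v = ρ then 1 else 0) := by
    intro w
    have hmem : (fun v => (if v = w then (1 : ZMod 2) else 0) + (if v = ρ then 1 else 0))
        ∈ LinearMap.ker (sumF G) := by
      rw [LinearMap.mem_ker]
      show ∑ v, ((if v = w then (1 : ZMod 2) else 0) + (if v = ρ then 1 else 0)) = 0
      rw [Finset.sum_add_distrib,
        Finset.sum_ite_eq' (Finset.univ : Finset G.V) w (fun _ => (1 : ZMod 2)),
        Finset.sum_ite_eq' (Finset.univ : Finset G.V) ρ (fun _ => (1 : ZMod 2))]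
      rw [if_pos (Finset.mem_univ w), if_pos (Finset.mem_univ ρ)]
      decide
    rw [← range_A G hc hg] at hmem
    obtain ⟨x', hx'⟩ := hmem
    have hcoord : ∀ e, x' e = z e w := by
      intro e
      have hlhs : ∑ v, z e v * ((Amat G).mulVecLin x') v = x' e := by
        calc ∑ v, z e v * ((Amat G).mulVecLin x') v
            = ∑ v, ∑ e', ((G.mult v e' : ℕ) : ZMod 2) * z e v * x' e' := by
              apply Finset.sum_congr rfl
              intro v _
              rw [show ((Amat G).mulVecLin x') v = ∑ e', ((G.mult v e' : ℕ) : ZMod 2) * x' e'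
                from mulVec_Amat G x' v, Finset.mul_sum]
              apply Finset.sum_congr rfl
              intro e' _
              ring
          _ = ∑ e', (∑ v, ((G.mult v e' : ℕ) : ZMod 2) * z e v) * x' e' := by
              rw [Finset.sum_comm]
              apply Finset.sum_congr rfl
              intro e' _
              rw [Finset.sum_mul]
          _ = ∑ e', (z e (G.fst e') + z e (G.snd e')) * x' e' := by
              apply Finset.sum_congr rfl
              intro e' _
              rw [show ∑ v, ((G.mult v e' : ℕ) : ZMod 2) * z e v
                = z e (G.fst e') + z e (G.snd e') from mulVec_AmatT G (z e) e']
          _ = ∑ e', (if e' = e then 1 else 0) * x' e' := by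
              apply Finset.sum_congr rfl
              intro e' _
              rw [hz1 e e']
          _ = x' e := by
              simp [Finset.sum_ite_eq']
      have hws : ∑ v, z e v * ((Amat G).mulVecLin x') v
          = ∑ v, z e v * ((if v = w then 1 else 0) + (if v = ρ then 1 else 0)) := by
        rw [show ((Amat G).mulVecLin x') = _ from hx']
      have hrhs : ∑ v, z e v * ((if v = w then (1 : ZMod 2) else 0) + (if v = ρ then 1 else 0))
          = z e w := by
        have : ∀ v, z e v * ((if v = w then (1 : ZMod 2) else 0) + (if v = ρ then 1 else 0))
            = (if v = w then z e v else 0) + (if v = ρ then z e v else 0) := by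
          intro v
          split_ifs <;> ring
        rw [Finset.sum_congr rfl fun v _ => this v, Finset.sum_add_distrib,
          Finset.sum_ite_eq' (Finset.univ : Finset G.V) w (fun v => z e v),
          Finset.sum_ite_eq' (Finset.univ : Finset G.V) ρ (fun v => z e v)]
        simp [hz2 e]
      rw [← hlhs, hws, hrhs]
    have hx'' : x' = fun e => z e w := funext hcoord
    rw [← hx''] at *
    exact hx'
  set P : G.V → Finset G.E :=
    fun w => Finset.univ.filter (fun e => G.mult w e ≠ 0 ∧ z e w = 1) with hP
  have hbot_of : ∀ w e, G.mult w e ≠ 0 → z e w = 1 → bot e = w := by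
    intro w e hm hz'
    have hw_or : w = top e ∨ w = bot e := by
      rcases htb e with ⟨h1, h2⟩ | ⟨h1, h2⟩ <;> rcases endpoint_of_inc G hm with h | h
      · exact Or.inl ((h1.trans h).symm)
      · exact Or.inr ((h2.trans h).symm)
      · exact Or.inr ((h2.trans h).symm)
      · exact Or.inl ((h1.trans h).symm)
    rcases hw_or with h | h
    · exfalso
      have := hztop e
      rw [← h, hz'] at this
      exact one_ne_zero this
    · exact h.symm
  have hmult_bot : ∀ e, G.mult (bot e) e ≠ 0 := by
    intro e
    apply inc_of_endpoint
    rcases htb e with ⟨h1, h2⟩ | ⟨h1, h2⟩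
    · exact Or.inr h2.symm
    · exact Or.inl h2.symm
  have hmult_top : ∀ e, G.mult (top e) e ≠ 0 := by
    intro e
    apply inc_of_endpoint
    rcases htb e with ⟨h1, h2⟩ | ⟨h1, h2⟩
    · exact Or.inl h1.symm
    · exact Or.inr h1.symm
  have hPodd : ∀ w, w ≠ ρ → ((P w).card : ZMod 2) = 1 := by
    intro w hw
    have h1 := congrFun (hA w) w
    have h2 : (Amat G *ᵥ (fun e => z e w)) w
        = ∑ e, ((G.mult w e : ℕ) : ZMod 2) * z e w := mulVec_Amat G _ w
    have h3 : ∑ e, ((G.mult w e : ℕ) : ZMod 2) * z e w = ((P w).card : ZMod 2) := by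
      rw [hP, Finset.card_filter, Nat.cast_sum]
      apply Finset.sum_congr rfl
      intro e _
      rcases mult01 G hc hg w e with h | h
      · rw [h]
        simp
      · rw [h]
        rcases zmod2_cases (z e w) with h' | h' <;> simp [h']
    rw [h2, h3] at h1
    rw [h1, if_pos rfl, if_neg hw, add_zero]
  have hPcount : ∀ e, (Finset.univ.filter (fun w => G.mult w e ≠ 0 ∧ z e w = 1))
      = {bot e} := by
    intro e
    ext w
    simp only [Finset.mem_filter, Finset.mem_univ, true_and, Finset.mem_singleton]
    constructor
    · rintro ⟨hm, hz'⟩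
      exact (hbot_of w e hm hz').symm
    · rintro rfl
      exact ⟨hmult_bot e, hzbot e⟩
  have hsum : ∑ w, (P w).card = Fintype.card G.E := by
    calc ∑ w, (P w).card
        = ∑ w, ∑ e, if G.mult w e ≠ 0 ∧ z e w = 1 then 1 else 0 := by
          apply Finset.sum_congr rfl
          intro w _
          rw [hP, Finset.card_filter]
      _ = ∑ e : G.E, ∑ w, if G.mult w e ≠ 0 ∧ z e w = 1 then 1 else 0 := Finset.sum_comm
      _ = ∑ _e : G.E, 1 := by
          apply Finset.sum_congr rfl
          intro e _
          rw [← Finset.card_filter, hPcount e, Finset.card_singleton]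
      _ = Fintype.card G.E := by
          rw [Finset.sum_const, Finset.card_univ, smul_eq_mul, mul_one]
  have hge : ∀ w, w ≠ ρ → 1 ≤ (P w).card := by
    intro w hw
    by_contra h
    push_neg at h
    have h0 : (P w).card = 0 := by omega
    have := hPodd w hw
    rw [h0] at this
    exact absurd this (by decide)
  have hρ0 : (P ρ).card = 0 := by
    rw [Finset.card_eq_zero, hP]
    ext e
    simp only [Finset.mem_filter, Finset.mem_univ, true_and, Finset.notMem_empty,
      iff_false, not_and]
    intro _
    rw [hz2 e]
    exact fun h => one_ne_zero h.symm
  have hsplit : ∑ w ∈ Finset.univ.erase ρ, (P w).card = Fintype.card G.E := by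
    have h0 : (P ρ).card + ∑ w ∈ Finset.univ.erase ρ, (P w).card = ∑ w, (P w).card :=
      Finset.add_sum_erase Finset.univ (fun w => (P w).card) (Finset.mem_univ ρ)
    rw [hρ0, zero_add] at h0
    rw [h0, hsum]
  have hcard_erase : (Finset.univ.erase ρ).card + 1 = Fintype.card G.V := by
    rw [Finset.card_erase_of_mem (Finset.mem_univ ρ), Finset.card_univ]
    have : 1 ≤ Fintype.card G.V := Fintype.card_pos_iff.mpr ⟨ρ⟩
    omega
  have hP1 : ∀ w, w ≠ ρ → (P w).card = 1 := by
    intro w hw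
    by_contra hne2
    have h2le : 2 ≤ (P w).card := by
      have := hge w hw
      omega
    have hgt : ∑ _w' ∈ Finset.univ.erase ρ, 1
        < ∑ w' ∈ Finset.univ.erase ρ, (P w').card := by
      apply Finset.sum_lt_sum
      · intro i hi
        exact hge i (Finset.ne_of_mem_erase hi)
      · exact ⟨w, Finset.mem_erase.mpr ⟨hw, Finset.mem_univ w⟩, by omega⟩
    rw [Finset.sum_const, smul_eq_mul, mul_one, hsplit] at hgt
    have hEcard := cardE G hc hg
    omega
  set par : G.V → G.E := fun w => if h : (P w).Nonempty then h.choose else edef with hpar_def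
  have hpar : ∀ w, w ≠ ρ → par w ∈ P w := by
    intro w hw
    have hne : (P w).Nonempty := Finset.card_pos.mp (by rw [hP1 w hw]; omega)
    rw [hpar_def]
    simp only [dif_pos hne]
    exact hne.choose_spec
  refine ⟨ρ, top, bot, par, φ, hρ, htb, hne_tb, hbotρ, hφ_step, ?_, ?_, ?_⟩
  · intro w hw
    have hm := hpar w hw
    rw [hP, Finset.mem_filter] at hm
    exact ⟨hm.2.1, hbot_of w (par w) hm.2.1 hm.2.2⟩
  · intro w e hm hbw
    have hw : w ≠ ρ := by
      rw [← hbw]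
      exact hbotρ e
    have hmem : e ∈ P w := by
      rw [hP, Finset.mem_filter]
      refine ⟨Finset.mem_univ e, hm, ?_⟩
      rw [← hbw]
      exact hzbot e
    obtain ⟨a, ha⟩ := Finset.card_eq_one.mp (hP1 w hw)
    have h1 : e = a := Finset.mem_singleton.mp (ha ▸ hmem)
    have h2 : par w = a := Finset.mem_singleton.mp (ha ▸ hpar w hw)
    rw [h1, h2]
  · intro e hne hleaf
    have hmw : G.mult (top e) e ≠ 0 := hmult_top e
    have hp := hpar (top e) hne
    rw [hP, Finset.mem_filter] at hp
    have hne2 : e ≠ par (top e) := by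
      intro h
      have h1 : z (par (top e)) (top e) = 0 := by
        rw [← h]
        exact hztop e
      rw [h1] at hp
      exact one_ne_zero hp.2.2.symm
    have hcard : (Inc G (top e)).card = 1 := by
      rw [card_Inc G hc hg, hleaf]
    obtain ⟨a, ha⟩ := Finset.card_eq_one.mp hcard
    have h1 : e = a := Finset.mem_singleton.mp (ha ▸ (mem_Inc G).mpr hmw)
    have h2 : par (top e) = a := Finset.mem_singleton.mp (ha ▸ (mem_Inc G).mpr hp.2.1)
    exact hne2 (h1.trans h2.symm)

lemma key (hG : G.Trivalent) (hc : G.components = 1) (hg : G.betti = 0)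
    (hE : ∀ e, ¬ G.IsLeaf (G.fst e) ∨ ¬ G.IsLeaf (G.snd e))
    (d : ℤ) (hd : 1 ≤ d) (ω : G.E → ℤ) (hω : G.InCone (d, ω)) :
    ∃ U : G.E → ℤ, G.IsNetwork U ∧ G.InCone (d - 1, fun e => ω e - U e) := by
  classical
  obtain ⟨ρ, top, bot, par, φ, hρ, htb, htb_ne, hbotρ, hφ, hpar, hparu, htopinner⟩ :=
    tree_struct G hG hc hg
  have hnn : ∀ e, 0 ≤ ω e := hω.2.1
  have hver : ∀ v, ¬ G.IsLeaf v →
      Even (G.vsum v ω) ∧ (∀ e, G.mult v e ≠ 0 → 2 * ω e ≤ G.vsum v ω) ∧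
      G.vsum v ω ≤ 2 * d := hω.2.2
  have hmult_top : ∀ e, G.mult (top e) e ≠ 0 := by
    intro e
    apply inc_of_endpoint
    rcases htb e with ⟨h1, _⟩ | ⟨h1, _⟩
    · exact Or.inl h1.symm
    · exact Or.inr h1.symm
  set Valid : G.E → Bool → Prop :=
    fun e b => (b = true → 1 ≤ ω e) ∧ (b = false → 2 * ω e ≤ 2 * d - 2) with hValid
  set a0 : G.E → Bool := fun e => if 2 * ω e ≤ 2 * d - 2 then false else true with ha0
  have hval_a0 : ∀ e, Valid e (a0 e) := by
    intro e
    simp only [ha0]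
    by_cases h : 2 * ω e ≤ 2 * d - 2
    · rw [if_pos h]
      exact ⟨Bool.noConfusion, fun _ => h⟩
    · rw [if_neg h]
      refine ⟨fun _ => ?_, Bool.noConfusion⟩
      rcases hE e with hv | hv
      · have h1 := (hver _ hv).2.1 e (inc_of_endpoint G (Or.inl rfl))
        have h2 := (hver _ hv).2.2
        omega
      · have h1 := (hver _ hv).2.1 e (inc_of_endpoint G (Or.inr rfl))
        have h2 := (hver _ hv).2.2
        omega
  set vls : G.V → Bool → (G.E → Bool) → G.E → ℤ := fun w a f e =>
    if e = par w then (if a then 1 else 0) else (if f e then 1 else 0) with hvls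
  set LOK : G.V → Bool → (G.E → Bool) → Prop := fun w a f =>
    (∑ e ∈ Inc G w, vls w a f e = 0 ∧ G.vsum w ω ≤ 2 * d - 2) ∨
    (∑ e ∈ Inc G w, vls w a f e = 2 ∧
      ∀ e ∈ Inc G w, vls w a f e = 0 → 2 * ω e ≤ G.vsum w ω - 2) with hLOK
  have hF : ∀ w (a : Bool), ¬G.IsLeaf w → w ≠ ρ → Valid (par w) a →
      ∃ f : G.E → Bool, (∀ e ∈ Inc G w, e ≠ par w → Valid e (f e)) ∧ LOK w a f := by
    intro w a hw hwρ hva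
    have hp : par w ∈ Inc G w := (mem_Inc G).mpr (hpar w hwρ).1
    have hcard : (Inc G w).card = 3 := by
      rw [card_Inc G hc hg]
      exact (hG w).resolve_left hw
    have hcard2 : ((Inc G w).erase (par w)).card = 2 := by
      rw [Finset.card_erase_of_mem hp, hcard]
    obtain ⟨g, h', hgh, hs⟩ := Finset.card_eq_two.mp hcard2
    have hNw : Inc G w = insert (par w) ((Inc G w).erase (par w)) :=
      (Finset.insert_erase hp).symm
    have hg_er : g ∈ (Inc G w).erase (par w) := by
      rw [hs]; exact Finset.mem_insert_self g {h'}
    have hh_er : h' ∈ (Inc G w).erase (par w) := by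
      rw [hs]; exact Finset.mem_insert_of_mem (Finset.mem_singleton_self h')
    have hgp : g ≠ par w := (Finset.mem_erase.mp hg_er).1
    have hhp : h' ≠ par w := (Finset.mem_erase.mp hh_er).1
    have hhg : h' ≠ g := Ne.symm hgh
    have hg_mem : g ∈ Inc G w := Finset.mem_of_mem_erase hg_er
    have hh_mem : h' ∈ Inc G w := Finset.mem_of_mem_erase hh_er
    have hpnot : par w ∉ ((Inc G w).erase (par w)) := Finset.notMem_erase _ _
    have hsum3 : ∀ F : G.E → ℤ, ∑ e ∈ Inc G w, F e = F (par w) + F g + F h' := by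
      intro F
      rw [hNw, Finset.sum_insert hpnot, hs, Finset.sum_pair hgh]
      ring
    have hmem_cases : ∀ e ∈ Inc G w, e ≠ par w → e = g ∨ e = h' := by
      intro e he hne
      have : e ∈ (Inc G w).erase (par w) := Finset.mem_erase.mpr ⟨hne, he⟩
      rw [hs] at this
      simpa using this
    have hws : G.vsum w ω = ω (par w) + ω g + ω h' := by
      rw [vsum_eq G hc hg w ω, hsum3]
    obtain ⟨hev, htri, hbd⟩ := hver w hw
    obtain ⟨k, hk⟩ := hev
    have htp := htri (par w) ((mem_Inc G).mp hp)
    have htg := htri g ((mem_Inc G).mp hg_mem)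
    have hth := htri h' ((mem_Inc G).mp hh_mem)
    have hnnp := hnn (par w)
    have hnng := hnn g
    have hnnh := hnn h'
    have hmk : ∀ (f : G.E → Bool) (bg bh : Bool), f g = bg → f h' = bh →
        (bg = true → 1 ≤ ω g) → (bg = false → 2 * ω g ≤ 2 * d - 2) →
        (bh = true → 1 ≤ ω h') → (bh = false → 2 * ω h' ≤ 2 * d - 2) →
        ∀ e ∈ Inc G w, e ≠ par w → Valid e (f e) := by
      intro f bg bh hfg0 hfh0 h1 h2 h3 h4 e he hne
      rcases hmem_cases e he hne with rfl | rfl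
      · rw [hfg0]; exact ⟨h1, h2⟩
      · rw [hfh0]; exact ⟨h3, h4⟩
    have hvls_par : ∀ (a' : Bool) (f : G.E → Bool),
        vls w a' f (par w) = (if a' then 1 else 0) := by
      intro a' f; simp only [hvls, if_pos rfl]
    have hvls_g : ∀ (a' : Bool) (f : G.E → Bool),
        vls w a' f g = (if f g then 1 else 0) := by
      intro a' f; simp only [hvls, if_neg hgp]
    have hvls_h : ∀ (a' : Bool) (f : G.E → Bool),
        vls w a' f h' = (if f h' then 1 else 0) := by
      intro a' f; simp only [hvls, if_neg hhp]
    have hLOKr : ∀ (a' : Bool) (f : G.E → Bool) (bg bh : Bool), f g = bg → f h' = bh →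
        (((if a' then (1:ℤ) else 0) + (if bg then 1 else 0) + (if bh then 1 else 0) = 0
            ∧ G.vsum w ω ≤ 2 * d - 2) ∨
        ((if a' then (1:ℤ) else 0) + (if bg then 1 else 0) + (if bh then 1 else 0) = 2
            ∧ ((if a' then (1:ℤ) else 0) = 0 → 2 * ω (par w) ≤ G.vsum w ω - 2)
            ∧ ((if bg then (1:ℤ) else 0) = 0 → 2 * ω g ≤ G.vsum w ω - 2)
            ∧ ((if bh then (1:ℤ) else 0) = 0 → 2 * ω h' ≤ G.vsum w ω - 2))) →
        LOK w a' f := by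
      intro a' f bg bh hfg0 hfh0 hyp
      rw [hLOK]
      have hsv : ∑ e ∈ Inc G w, vls w a' f e
          = (if a' then (1:ℤ) else 0) + (if bg then 1 else 0) + (if bh then 1 else 0) := by
        rw [hsum3, hvls_par, hvls_g, hvls_h, hfg0, hfh0]
      rcases hyp with ⟨h1, h2⟩ | ⟨h1, h2, h3, h4⟩
      · exact Or.inl ⟨by rw [hsv, h1], h2⟩
      · refine Or.inr ⟨by rw [hsv, h1], ?_⟩
        intro e he h0
        rcases eq_or_ne e (par w) with rfl | hne
        · rw [hvls_par] at h0
          exact h2 h0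
        · rcases hmem_cases e he hne with rfl | rfl
          · rw [hvls_g, hfg0] at h0
            exact h3 h0
          · rw [hvls_h, hfh0] at h0
            exact h4 h0
    cases a with
    | false =>
      have hvf : 2 * ω (par w) ≤ 2 * d - 2 := hva.2 rfl
      by_cases hfull : G.vsum w ω ≤ 2 * d - 2
      · refine ⟨fun e' => if e' = g then false else if e' = h' then false else false,
          hmk _ false false (by simp) (by simp [hhg]) Bool.noConfusion (fun _ => by omega)
            Bool.noConfusion (fun _ => by omega), ?_⟩
        exact hLOKr _ _ false false (by simp) (by simp [hhg])
          (Or.inl ⟨by norm_num, hfull⟩)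
      · refine ⟨fun e' => if e' = g then true else if e' = h' then true else false,
          hmk _ true true (by simp) (by simp [hhg]) (fun _ => by omega) Bool.noConfusion
            (fun _ => by omega) Bool.noConfusion, ?_⟩
        exact hLOKr _ _ true true (by simp) (by simp [hhg])
          (Or.inr ⟨by norm_num, fun _ => by omega,
            fun hcon => by norm_num at hcon, fun hcon => by norm_num at hcon⟩)
    | true =>
      have hvt : 1 ≤ ω (par w) := hva.1 rfl
      by_cases hcase : 1 ≤ ω g ∧ 2 * ω h' ≤ G.vsum w ω - 2
      · refine ⟨fun e' => if e' = g then true else if e' = h' then false else false,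
          hmk _ true false (by simp) (by simp [hhg]) (fun _ => hcase.1) Bool.noConfusion
            Bool.noConfusion (fun _ => by omega), ?_⟩
        exact hLOKr _ _ true false (by simp) (by simp [hhg])
          (Or.inr ⟨by norm_num, fun hcon => by norm_num at hcon,
            fun hcon => by norm_num at hcon, fun _ => hcase.2⟩)
      · have hor : ω g ≤ 0 ∨ G.vsum w ω - 1 ≤ 2 * ω h' := by
          by_cases h : 1 ≤ ω g
          · right
            have h2 := hcase
            push_neg at h2
            have h3 := h2 h
            omega
          · left; omega
        have hh1 : 1 ≤ ω h' := by omega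
        have hg2 : 2 * ω g ≤ G.vsum w ω - 2 := by omega
        refine ⟨fun e' => if e' = g then false else if e' = h' then true else false,
          hmk _ false true (by simp) (by simp [hhg]) Bool.noConfusion (fun _ => by omega)
            (fun _ => hh1) Bool.noConfusion, ?_⟩
        exact hLOKr _ _ false true (by simp) (by simp [hhg])
          (Or.inr ⟨by norm_num, fun hcon => by norm_num at hcon,
            fun _ => hg2, fun hcon => by norm_num at hcon⟩)
  set C : G.V → Bool → Prop := fun w a => ¬G.IsLeaf w ∧ w ≠ ρ ∧ Valid (par w) a with hC_def
  set ch : G.V → Bool → G.E → Bool := fun w a =>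
    if h : C w a then (hF w a h.1 h.2.1 h.2.2).choose else fun _ => false with hch_def
  have hch : ∀ w a, (h : C w a) →
      (∀ e ∈ Inc G w, e ≠ par w → Valid e (ch w a e)) ∧ LOK w a (ch w a) := by
    intro w a h
    rw [hch_def]
    simp only [dif_pos h]
    exact (hF w a h.1 h.2.1 h.2.2).choose_spec
  have hdec : ∀ e, top e ≠ ρ → φ (top (par (top e))) < φ (top e) := by
    intro e he
    have h1 := hpar (top e) he
    have h2 := hφ (par (top e))
    rw [h1.2] at h2
    omega
  set val : G.E → Bool := valFun φ top ρ a0 ch par hdec with hval_def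
  have hval_root : ∀ e, top e = ρ → val e = a0 e := by
    intro e h
    rw [hval_def, valFun, dif_pos h]
  have hval_in : ∀ e, top e ≠ ρ → val e = ch (top e) (val (par (top e))) e := by
    intro e h
    rw [hval_def]
    conv_lhs => rw [valFun]
    rw [dif_neg h]
  have hnotpar : ∀ e, top e ≠ ρ → e ≠ par (top e) := by
    intro e he h
    apply htb_ne e
    have := (hpar (top e) he).2
    rw [← h] at this
    exact this.symm
  have hvalid : ∀ n, ∀ e, φ (top e) ≤ n → Valid e (val e) := by
    intro n
    induction n with
    | zero =>
      intro e h0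
      have hroot : top e = ρ := by
        by_contra hne
        have := hdec e hne
        omega
      rw [hval_root e hroot]
      exact hval_a0 e
    | succ n ih =>
      intro e hle
      by_cases hroot : top e = ρ
      · rw [hval_root e hroot]
        exact hval_a0 e
      · have hCc : C (top e) (val (par (top e))) := by
          refine ⟨htopinner e hroot, hroot, ?_⟩
          apply ih
          have := hdec e hroot
          omega
        rw [hval_in e hroot]
        exact (hch (top e) _ hCc).1 e ((mem_Inc G).mpr (hmult_top e)) (hnotpar e hroot)
  have hValall : ∀ e, Valid e (val e) := fun e => hvalid (φ (top e)) e le_rfl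
  set U : G.E → ℤ := fun e => if val e then 1 else 0 with hU
  have hU01 : ∀ e, U e = 0 ∨ U e = 1 := by
    intro e
    rw [hU]
    by_cases h : val e <;> simp [h]
  have hUnn : ∀ e, 0 ≤ U e := by
    intro e
    rcases hU01 e with h | h <;> omega
  have hUle : ∀ e, U e ≤ ω e := by
    intro e
    have hv := hValall e
    rcases hU01 e with h | h
    · have := hnn e; omega
    · have h1 : val e = true := by
        rw [hU] at h
        by_cases hb : val e
        · exact hb
        · simp [hb] at h
      have := hv.1 h1
      omega
  have hlocal : ∀ w, ¬G.IsLeaf w →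
      (G.vsum w U = 0 ∧ G.vsum w ω ≤ 2 * d - 2) ∨
      (G.vsum w U = 2 ∧ ∀ e, G.mult w e ≠ 0 → U e = 0 → 2 * ω e ≤ G.vsum w ω - 2) := by
    intro w hw
    have hwρ : w ≠ ρ := fun h => hw (h ▸ hρ)
    have hCc : C w (val (par w)) := ⟨hw, hwρ, hValall (par w)⟩
    obtain ⟨hch1, hch2⟩ := hch w (val (par w)) hCc
    have hUeq : ∀ e ∈ Inc G w, U e = vls w (val (par w)) (ch w (val (par w))) e := by
      intro e he
      have hm : G.mult w e ≠ 0 := (mem_Inc G).mp he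
      by_cases hpw : e = par w
      · simp only [hvls, if_pos hpw]
        rw [hpw]
      · have hwtop : w = top e := by
          rcases htb e with ⟨h1, h2⟩ | ⟨h1, h2⟩ <;> rcases endpoint_of_inc G hm with h | h
          · exact (h1.trans h).symm
          · exact absurd (hparu w e hm (h2.trans h)) hpw
          · exact absurd (hparu w e hm (h2.trans h)) hpw
          · exact (h1.trans h).symm
        have htene : top e ≠ ρ := by
          rw [← hwtop]
          exact hwρ
        have hve : val e = ch w (val (par w)) e := by
          rw [hval_in e htene, ← hwtop]
        simp only [hvls, if_neg hpw]
        show (if val e then (1:ℤ) else 0) = (if ch w (val (par w)) e then (1:ℤ) else 0)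
        rw [hve]
    have hvsU : G.vsum w U = ∑ e ∈ Inc G w, vls w (val (par w)) (ch w (val (par w))) e := by
      rw [vsum_eq G hc hg w U]
      exact Finset.sum_congr rfl hUeq
    rw [hLOK] at hch2
    rcases hch2 with ⟨h1, h2⟩ | ⟨h1, h2⟩
    · left
      exact ⟨by rw [hvsU, h1], h2⟩
    · right
      refine ⟨by rw [hvsU, h1], ?_⟩
      intro e hm hU0
      apply h2 e ((mem_Inc G).mpr hm)
      rw [← hUeq e ((mem_Inc G).mpr hm)]
      exact hU0
  refine ⟨U, ⟨hU01, ?_⟩, ?_, ?_, ?_⟩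
  · intro v hv
    rcases hlocal v hv with ⟨h1, _⟩ | ⟨h1, _⟩
    · exact ⟨0, by omega⟩
    · exact ⟨1, by omega⟩
  · show (0:ℤ) ≤ d - 1
    omega
  · intro e
    show 0 ≤ ω e - U e
    have := hUle e
    omega
  · intro v hv
    obtain ⟨hev, htri, hbd⟩ := hver v hv
    obtain ⟨k, hk⟩ := hev
    have hsub : G.vsum v (fun e => ω e - U e) = G.vsum v ω - G.vsum v U := vsum_sub G v ω U
    rcases hlocal v hv with ⟨h1, h2⟩ | ⟨h1, h2⟩
    · have hz : ∀ e, G.mult v e ≠ 0 → U e = 0 := by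
        intro e hm
        have hsum0 : ∑ e ∈ Inc G v, U e = 0 := by
          rw [← vsum_eq G hc hg v U]
          exact h1
        have := (Finset.sum_eq_zero_iff_of_nonneg (fun e _ => hUnn e)).mp hsum0 e
          ((mem_Inc G).mpr hm)
        exact this
      refine ⟨⟨k, by rw [hsub]; omega⟩, ?_, ?_⟩
      · intro e hm
        show 2 * (ω e - U e) ≤ G.vsum v (fun e => ω e - U e)
        rw [hsub, hz e hm, h1]
        have := htri e hm
        omega
      · show G.vsum v (fun e => ω e - U e) ≤ 2 * (d - 1)
        rw [hsub, h1]
        omega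
    · refine ⟨⟨k - 1, by rw [hsub]; omega⟩, ?_, ?_⟩
      · intro e hm
        show 2 * (ω e - U e) ≤ G.vsum v (fun e => ω e - U e)
        rw [hsub, h1]
        rcases hU01 e with h0 | h0
        · have := h2 e hm h0
          omega
        · have := htri e hm
          omega
      · show G.vsum v (fun e => ω e - U e) ≤ 2 * (d - 1)
        rw [hsub, h1]
        omega

end TCAux

/-- For a trivalent tree, `τ(G)` is generated by its degree-1
elements, which are exactly the networks; a network is determined by its values
at the leaves, and the generators are in bijection with 0-1 sequences on the
leaves with an even number of 1's. (We assume each edge has an inner endpoint.) -/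
theorem tree_cone_generators (G : TGraph) (hG : G.Trivalent) (hc : G.components = 1)
    (hg : G.betti = 0) (hE : ∀ e, ¬ G.IsLeaf (G.fst e) ∨ ¬ G.IsLeaf (G.snd e)) :
    (∀ ω : ℤ × (G.E → ℤ), G.InCone ω →
        ω ∈ AddSubmonoid.closure {ω' : ℤ × (G.E → ℤ) | G.InCone ω' ∧ ω'.1 = 1}) ∧
    (∀ ω : ℤ × (G.E → ℤ), G.InCone ω → ω.1 = 1 → G.IsNetwork ω.2) ∧
    (∀ u : G.E → ℤ, G.IsNetwork u → G.InCone (1, u)) ∧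
    (∀ u w : G.E → ℤ, G.IsNetwork u → G.IsNetwork w →
        (∀ v, G.IsLeaf v → G.vsum v u = G.vsum v w) → u = w) ∧
    (∀ f : {v : G.V // G.IsLeaf v} → ℤ, (∀ l, f l = 0 ∨ f l = 1) →
        Even (∑ l, f l) →
        ∃ u : G.E → ℤ, G.IsNetwork u ∧ ∀ l : {v : G.V // G.IsLeaf v}, G.vsum l.1 u = f l) := by
  classical
  refine ⟨?_, TCAux.cone_deg1_net G hE, TCAux.net_cone G hG hc hg,
    TCAux.networks_eq G hc hg, TCAux.networks_exist G hc hg⟩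
  have main : ∀ n : ℕ, ∀ ω : ℤ × (G.E → ℤ), G.InCone ω → ω.1 = (n : ℤ) →
      ω ∈ AddSubmonoid.closure {ω' : ℤ × (G.E → ℤ) | G.InCone ω' ∧ ω'.1 = 1} := by
    intro n
    induction n with
    | zero =>
      intro ω hω h0
      have h0' : ω.1 = 0 := by rw [h0]; norm_num
      have hzero : ω = 0 := by
        rw [Prod.ext_iff]
        constructor
        · exact h0'
        · funext e
          have hv : ∃ v, ¬ G.IsLeaf v ∧ G.mult v e ≠ 0 := by
            rcases hE e with hv | hv
            · exact ⟨_, hv, TCAux.inc_of_endpoint G (Or.inl rfl)⟩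
            · exact ⟨_, hv, TCAux.inc_of_endpoint G (Or.inr rfl)⟩
          obtain ⟨v, hv, hm⟩ := hv
          have h3 := hω.2.2 v hv
          have h4 := h3.2.1 e hm
          have h5 := h3.2.2
          have h6 := hω.2.1 e
          show ω.2 e = 0
          omega
      rw [hzero]
      exact AddSubmonoid.zero_mem _
    | succ n ih =>
      intro ω hω h0
      have hd : (1:ℤ) ≤ ω.1 := by rw [h0]; push_cast; omega
      have hω' : G.InCone (ω.1, ω.2) := hω
      obtain ⟨U, hU, hcone2⟩ := TCAux.key G hG hc hg hE ω.1 hd ω.2 hω'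
      have h1 : (1, U) ∈ {ω' : ℤ × (G.E → ℤ) | G.InCone ω' ∧ ω'.1 = 1} :=
        ⟨TCAux.net_cone G hG hc hg U hU, rfl⟩
      have hmem2 : ((ω.1 - 1, fun e => ω.2 e - U e) : ℤ × (G.E → ℤ))
          ∈ AddSubmonoid.closure {ω' : ℤ × (G.E → ℤ) | G.InCone ω' ∧ ω'.1 = 1} := by
        apply ih
        · exact hcone2
        · show ω.1 - 1 = (n : ℤ)
          rw [h0]
          push_cast
          ring
      have hsplit : ω = (1, U) + (ω.1 - 1, fun e => ω.2 e - U e) := by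
        rw [Prod.ext_iff]
        constructor
        · show ω.1 = 1 + (ω.1 - 1)
          ring
        · funext e
          show ω.2 e = U e + (ω.2 e - U e)
          ring
      rw [hsplit]
      exact AddSubmonoid.add_mem _ (AddSubmonoid.subset_closure h1) hmem2
  intro ω hω
  exact main ω.1.toNat ω hω (Int.toNat_of_nonneg hω.1).symm
end

section
/- Let G be a polygon graph (a trivalent graph with 2k edges, of which k form the unique cycle and k are cycle legs) and let ω ∈ τ(G) have degree 2. If some cycle edge e has ω(e) = 0, then ω is a sum of two networks (degree-1 elements of τ(G)). -/
/-- Cyclic successor on `Fin k`. -/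
def cnext {k : ℕ} (i : Fin k) : Fin k := ⟨(i.val + 1) % k, Nat.mod_lt _ i.pos⟩

/-- The polygon graph with `k` cycle edges and `k` cycle legs: cycle vertices
`Sum.inl i`, leaf vertices `Sum.inr i`; cycle edges `Sum.inl i` (from cycle
vertex `i` to cycle vertex `i+1`) and cycle legs `Sum.inr i` (from cycle vertex
`i` to the `i`-th leaf). -/
def polygon (k : ℕ) : TGraph where
  V := Fin k ⊕ Fin k
  E := Fin k ⊕ Fin k
  fst := Sum.elim (fun i => Sum.inl i) (fun i => Sum.inl i)
  snd := Sum.elim (fun i => Sum.inl (cnext i)) (fun i => Sum.inr i)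

/-!
Since `ω` has degree `2`, all its values lie in `{0, 1, 2}`. It suffices to find a `0/1` labelling
`u` such that `ω - u` is also `0/1` and `u` has even sum at every cycle vertex: then `u` and `ω - u`
are networks, and networks are degree-`1` elements of the cone. The values `0` and `2` force `u`,
an odd value leaves a free bit. Cutting the cycle at the zero edge leaves a path, along which the
free bits are chosen vertex by vertex; the zero edge forces `u = 0` at both ends of the path, so the
choices close up around the cycle.
-/

namespace TGraph

variable (G : TGraph) {v : G.V} {e : G.E}

lemma mult_ne_zero_of_fst_eq (h : G.fst e = v) : G.mult v e ≠ 0 := by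
  simp [mult, h]

lemma mult_ne_zero_of_snd_eq (h : G.snd e = v) : G.mult v e ≠ 0 := by
  simp [mult, h]

lemma degree_eq_vsum_one (v : G.V) : (G.degree v : ℤ) = G.vsum v 1 := by
  simp [degree, vsum]

lemma vsum_sub (v : G.V) (u w : G.E → ℤ) : G.vsum v (u - w) = G.vsum v u - G.vsum v w := by
  simp only [vsum, Pi.sub_apply, mul_sub, Finset.sum_sub_distrib]

variable {G} {u : G.E → ℤ}

lemma mult_mul_le_vsum (hu : ∀ e, 0 ≤ u e) (v : G.V) (e : G.E) :
    (G.mult v e : ℤ) * u e ≤ G.vsum v u :=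
  Finset.single_le_sum (fun e _ => mul_nonneg (Nat.cast_nonneg _) (hu e)) (Finset.mem_univ e)

lemma vsum_nonneg (hu : ∀ e, 0 ≤ u e) (v : G.V) : 0 ≤ G.vsum v u :=
  Finset.sum_nonneg fun e _ => mul_nonneg (Nat.cast_nonneg _) (hu e)

lemma vsum_le_degree (hu : ∀ e, u e ≤ 1) (v : G.V) : G.vsum v u ≤ G.degree v := by
  rw [degree_eq_vsum_one]
  exact Finset.sum_le_sum fun e _ => mul_le_mul_of_nonneg_left (hu e) (Nat.cast_nonneg _)

theorem inCone_one_of_isNetwork (hG : G.Trivalent) (hu : G.IsNetwork u) : G.InCone (1, u) := by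
  have hnn : ∀ e, 0 ≤ u e := fun e => by rcases hu.1 e with h | h <;> omega
  have hle : ∀ e, u e ≤ 1 := fun e => by rcases hu.1 e with h | h <;> omega
  refine ⟨zero_le_one, hnn, fun v hv => ⟨hu.2 v hv, fun e he => ?_, ?_⟩⟩ <;>
    obtain ⟨m, hm⟩ := hu.2 v hv
  · show 2 * u e ≤ G.vsum v u
    have hmult : (1 : ℤ) ≤ G.mult v e := by exact_mod_cast Nat.one_le_iff_ne_zero.mpr he
    have hsingle := mult_mul_le_vsum hnn v e
    have := vsum_nonneg hnn v
    rcases hu.1 e with h | h <;> rw [h] at hsingle ⊢ <;> omega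
  · show G.vsum v u ≤ 2 * 1
    have := vsum_le_degree hle v
    rw [(hG v).resolve_left hv] at this
    omega

theorem isNetwork_sub {ω : G.E → ℤ} (hω : ∀ v, ¬ G.IsLeaf v → Even (G.vsum v ω))
    (hu : G.IsNetwork u) (hωu : ∀ e, ω e - u e = 0 ∨ ω e - u e = 1) : G.IsNetwork (ω - u) :=
  ⟨hωu, fun v hv => by rw [vsum_sub]; exact (hω v hv).sub (hu.2 v hv)⟩

end TGraph

def IsBitSplit (x y : ℤ) : Prop := (y = 0 ∨ y = 1) ∧ (x - y = 0 ∨ x - y = 1)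

def splitBit (x c : ℤ) : ℤ := if x % 2 = 0 then x / 2 else c % 2

/-- The conditions of `τ(G)` in degree `2` at a trivalent vertex with incident values `p q r`;
nonnegativity follows from the triangle inequalities. -/
def IsConeTriple (p q r : ℤ) : Prop :=
  Even (p + q + r) ∧ 2 * p ≤ p + q + r ∧ 2 * q ≤ p + q + r ∧ 2 * r ≤ p + q + r ∧
    p + q + r ≤ 4

lemma isBitSplit_splitBit {x : ℤ} (hx₀ : 0 ≤ x) (hx₂ : x ≤ 2) (c : ℤ) :
    IsBitSplit x (splitBit x c) := by
  unfold IsBitSplit splitBit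
  split_ifs <;> omega

namespace IsConeTriple

variable {p q r : ℤ}

lemma bounds (h : IsConeTriple p q r) : (0 ≤ p ∧ p ≤ 2) ∧ (0 ≤ q ∧ q ≤ 2) ∧ (0 ≤ r ∧ r ≤ 2) := by
  obtain ⟨-, hp, hq, hr, h4⟩ := h
  omega

lemma even_add_splitBit (h : IsConeTriple p q r) {y : ℤ} (hy : IsBitSplit p y) :
    Even (y + splitBit q (y + r / 2) + splitBit r (y + splitBit q (y + r / 2))) := by
  obtain ⟨⟨m, hm⟩, hp, hq, hr, h4⟩ := h
  rw [Int.even_iff]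
  unfold IsBitSplit at hy
  unfold splitBit
  split_ifs <;> omega

end IsConeTriple

section CutCycle

variable (A B : ℕ → ℤ)

/-- Splits the cycle values `A t`, read from the zero edge at `t = 0`. At the vertex between edges
`t` and `t + 1` with even leg value `B (t + 1)`, the free bit of an odd edge `t + 1` is chosen so
that the vertex parity works out; an odd leg is fixed by `cutLegSplit`. -/
def cutSplit : ℕ → ℤ
  | 0 => 0
  | t + 1 => splitBit (A (t + 1)) (cutSplit t + B (t + 1) / 2)

def cutLegSplit (t : ℕ) : ℤ := splitBit (B (t + 1)) (cutSplit A B t + cutSplit A B (t + 1))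

variable {A B}

lemma isBitSplit_cutSplit (hA₀ : A 0 = 0) (hv : ∀ t, IsConeTriple (A t) (A (t + 1)) (B (t + 1))) :
    ∀ t, IsBitSplit (A t) (cutSplit A B t)
  | 0 => by simp [IsBitSplit, cutSplit, hA₀]
  | t + 1 => by
    obtain ⟨-, hA, -⟩ := (hv t).bounds
    exact isBitSplit_splitBit hA.1 hA.2 _

lemma isBitSplit_cutLegSplit (hv : ∀ t, IsConeTriple (A t) (A (t + 1)) (B (t + 1))) (t : ℕ) :
    IsBitSplit (B (t + 1)) (cutLegSplit A B t) := by
  obtain ⟨-, -, hB⟩ := (hv t).bounds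
  exact isBitSplit_splitBit hB.1 hB.2 _

lemma even_cutSplit_add_cutLegSplit (hA₀ : A 0 = 0)
    (hv : ∀ t, IsConeTriple (A t) (A (t + 1)) (B (t + 1))) (t : ℕ) :
    Even (cutSplit A B t + cutSplit A B (t + 1) + cutLegSplit A B t) :=
  (hv t).even_add_splitBit (isBitSplit_cutSplit hA₀ hv t)

lemma periodic_cutSplit {k : ℕ} (hk : 0 < k) (hA : Function.Periodic A k)
    (hB : Function.Periodic B k) (hA₀ : A 0 = 0) : Function.Periodic (cutSplit A B) k := by
  intro t
  induction t with
  | zero =>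
    obtain ⟨n, rfl⟩ : ∃ n, k = n + 1 := Nat.exists_eq_succ_of_ne_zero hk.ne'
    have hAk : A (n + 1) = 0 := by simpa [hA₀] using hA 0
    simp [cutSplit, splitBit, hAk]
  | succ t ih =>
    rw [Nat.add_right_comm, cutSplit, cutSplit, ih, Nat.add_right_comm t k, hA, hB]

lemma periodic_cutLegSplit {k : ℕ} (hk : 0 < k) (hA : Function.Periodic A k)
    (hB : Function.Periodic B k) (hA₀ : A 0 = 0) : Function.Periodic (cutLegSplit A B) k := by
  intro t
  have hC := periodic_cutSplit hk hA hB hA₀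
  rw [cutLegSplit, cutLegSplit, Nat.add_right_comm, hB, hC, hC]

end CutCycle

section CyclicSuccessor

variable {k : ℕ}

lemma cnext_val (j : Fin k) : (cnext j : ℕ) = if (j : ℕ) + 1 = k then 0 else (j : ℕ) + 1 := by
  have := j.isLt
  simp only [cnext]
  split_ifs with h
  · rw [h, Nat.mod_self]
  · exact Nat.mod_eq_of_lt (by omega)

lemma cnext_injective : Function.Injective (cnext : Fin k → Fin k) := by
  intro a b h
  have hv := congrArg Fin.val h
  rw [cnext_val, cnext_val] at hv
  have := a.isLt
  have := b.isLt
  ext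
  split_ifs at hv <;> omega

lemma cnext_surjective : Function.Surjective (cnext : Fin k → Fin k) :=
  Finite.surjective_of_injective cnext_injective

lemma cnext_iterate_val (i : Fin k) (t : ℕ) : (cnext^[t] i : ℕ) = (i + t) % k := by
  induction t with
  | zero => simp [Nat.mod_eq_of_lt i.isLt]
  | succ t ih =>
    rw [Function.iterate_succ_apply', cnext]
    simp only [ih, Nat.mod_add_mod, Nat.add_assoc]

lemma periodic_cnext_iterate (i : Fin k) : Function.Periodic (fun t => cnext^[t] i) k := by
  intro t
  ext
  simp only [cnext_iterate_val, ← Nat.add_assoc, Nat.add_mod_right]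

lemma exists_cnext_iterate_eq (i e : Fin k) : ∃ t, cnext^[t] i = e := by
  refine ⟨e + k - i, Fin.ext ?_⟩
  rw [cnext_iterate_val, Nat.add_sub_cancel' (by omega), Nat.add_mod_right,
    Nat.mod_eq_of_lt e.isLt]

lemma exists_eq_comp_cnext_iterate {α : Type*} (i : Fin k) {F : ℕ → α}
    (hF : Function.Periodic F k) : ∃ f : Fin k → α, ∀ t, f (cnext^[t] i) = F t := by
  choose idx hidx using exists_cnext_iterate_eq i
  refine ⟨fun e => F (idx e), fun t => ?_⟩
  have hmod : idx (cnext^[t] i) % k = t % k := by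
    have := congrArg Fin.val (hidx (cnext^[t] i))
    rw [cnext_iterate_val, cnext_iterate_val] at this
    exact Nat.ModEq.add_left_cancel' _ this
  simp only [← hF.map_mod_nat t, ← hmod, hF.map_mod_nat]

end CyclicSuccessor

namespace polygon

variable {k : ℕ}

lemma vsum_inl_cnext (e : Fin k) (u : (polygon k).E → ℤ) :
    (polygon k).vsum (.inl (cnext e)) u = u (.inl e) + u (.inl (cnext e)) + u (.inr (cnext e)) := by
  unfold TGraph.vsum
  erw [Fintype.sum_sum_type]
  simp only [TGraph.mult, polygon, Sum.elim_inl, Sum.elim_inr, Sum.inl.injEq, reduceCtorEq,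
    cnext_injective.eq_iff, Nat.cast_add, Nat.cast_ite, Nat.cast_one, Nat.cast_zero, add_mul,
    ite_mul, one_mul, zero_mul, Finset.sum_add_distrib, Finset.sum_ite_eq', Finset.mem_univ,
    ↓reduceIte, add_zero]
  ring

lemma vsum_inr (j : Fin k) (u : (polygon k).E → ℤ) :
    (polygon k).vsum (.inr j) u = u (.inr j) := by
  unfold TGraph.vsum
  erw [Fintype.sum_sum_type]
  simp [TGraph.mult, polygon]

lemma isLeaf_inr (j : Fin k) : (polygon k).IsLeaf (.inr j) := by
  have : ((polygon k).degree (.inr j) : ℤ) = 1 := by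
    rw [TGraph.degree_eq_vsum_one (polygon k) (.inr j), vsum_inr]; rfl
  exact_mod_cast this

lemma degree_inl (j : Fin k) : (polygon k).degree (.inl j) = 3 := by
  obtain ⟨e, rfl⟩ := cnext_surjective j
  have : ((polygon k).degree (.inl (cnext e)) : ℤ) = 1 + 1 + 1 := by
    rw [TGraph.degree_eq_vsum_one (polygon k) (.inl (cnext e)), vsum_inl_cnext]; rfl
  omega

lemma not_isLeaf_inl (j : Fin k) : ¬ (polygon k).IsLeaf (.inl j) := by
  simp [TGraph.IsLeaf, degree_inl]

lemma trivalent : (polygon k).Trivalent := by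
  rintro (j | j)
  · exact .inr (degree_inl j)
  · exact .inl (isLeaf_inr j)

lemma isConeTriple_of_inCone {ω : ℤ × ((polygon k).E → ℤ)} (hω : (polygon k).InCone ω)
    (hdeg : ω.1 = 2) (e : Fin k) :
    IsConeTriple (ω.2 (.inl e)) (ω.2 (.inl (cnext e))) (ω.2 (.inr (cnext e))) := by
  obtain ⟨hpar, htri, hle⟩ := hω.2.2 (.inl (cnext e)) (not_isLeaf_inl _)
  rw [vsum_inl_cnext] at hpar htri hle
  refine ⟨hpar, htri _ ?_, htri _ ?_, htri _ ?_, by omega⟩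
  · exact TGraph.mult_ne_zero_of_snd_eq _ rfl
  · exact TGraph.mult_ne_zero_of_fst_eq _ rfl
  · exact TGraph.mult_ne_zero_of_fst_eq _ rfl

lemma exists_isBitSplit_of_cycle_edge_eq_zero {ω : ℤ × ((polygon k).E → ℤ)}
    (hω : (polygon k).InCone ω) (hdeg : ω.1 = 2) (i : Fin k) (hi : ω.2 (.inl i) = 0) :
    ∃ u : (polygon k).E → ℤ,
      (∀ e, IsBitSplit (ω.2 e) (u e)) ∧ ∀ j, Even ((polygon k).vsum (.inl j) u) := by
  set A : ℕ → ℤ := fun t => ω.2 (.inl (cnext^[t] i))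
  set B : ℕ → ℤ := fun t => ω.2 (.inr (cnext^[t] i))
  have hA : Function.Periodic A k := fun t => by simp only [A, periodic_cnext_iterate i t]
  have hB : Function.Periodic B k := fun t => by simp only [B, periodic_cnext_iterate i t]
  have hA₀ : A 0 = 0 := hi
  have hv : ∀ t, IsConeTriple (A t) (A (t + 1)) (B (t + 1)) := fun t => by
    simpa only [A, B, Function.iterate_succ_apply'] using isConeTriple_of_inCone hω hdeg _
  obtain ⟨c, hc⟩ := exists_eq_comp_cnext_iterate i (periodic_cutSplit i.pos hA hB hA₀)
  obtain ⟨l, hl⟩ := exists_eq_comp_cnext_iterate (cnext i) (periodic_cutLegSplit i.pos hA hB hA₀)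
  refine ⟨Sum.elim c l, ?_, fun j => ?_⟩
  · rintro (e | e)
    · obtain ⟨t, rfl⟩ := exists_cnext_iterate_eq i e
      show IsBitSplit (A t) (c (cnext^[t] i))
      rw [hc]
      exact isBitSplit_cutSplit hA₀ hv t
    · obtain ⟨t, rfl⟩ := exists_cnext_iterate_eq (cnext i) e
      show IsBitSplit (B (t + 1)) (l (cnext^[t] (cnext i)))
      rw [hl]
      exact isBitSplit_cutLegSplit hv t
  · obtain ⟨e, rfl⟩ := cnext_surjective j
    obtain ⟨t, rfl⟩ := exists_cnext_iterate_eq i e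
    rw [vsum_inl_cnext _ (Sum.elim c l)]
    show Even (c (cnext^[t] i) + c (cnext (cnext^[t] i)) + l (cnext (cnext^[t] i)))
    rw [← Function.iterate_succ_apply' cnext t i, hc, hc, Function.iterate_succ_apply, hl]
    exact even_cutSplit_add_cutLegSplit hA₀ hv t

end polygon

/-- In a polygon graph, a degree-2 element of the cone vanishing
on some cycle edge is a sum of two networks (degree-1 cone elements). -/
theorem degree_two_with_zero_cycle_edge_decomposes (k : ℕ)
    (ω : ℤ × ((polygon k).E → ℤ)) (hω : (polygon k).InCone ω) (hdeg : ω.1 = 2)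
    (i : Fin k) (hi : ω.2 (Sum.inl i) = 0) :
    ∃ u w : (polygon k).E → ℤ,
      (polygon k).InCone (1, u) ∧ (polygon k).InCone (1, w) ∧ ω = (1, u) + (1, w) := by
  obtain ⟨u, hsplit, heven⟩ := polygon.exists_isBitSplit_of_cycle_edge_eq_zero hω hdeg i hi
  have hnet : (polygon k).IsNetwork u := by
    refine ⟨fun e => (hsplit e).1, ?_⟩
    rintro (j | j) hj
    · exact heven j
    · exact absurd (polygon.isLeaf_inr j) hj
  refine ⟨u, ω.2 - u, TGraph.inCone_one_of_isNetwork polygon.trivalent hnet,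
    TGraph.inCone_one_of_isNetwork polygon.trivalent
      (TGraph.isNetwork_sub (fun v hv => (hω.2.2 v hv).1) hnet fun e => (hsplit e).2), ?_⟩
  ext
  · simp [hdeg]
  · simp
end
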